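/- arXiv:1306.6373 — 3 statements merged into one kernel-verified Lean document; each statement's English description precedes it below -/
import Mathlib

section
/- Fix constants 0 < a < b and suppose p = p(n) satisfies n·p = 1 + O(n^{-1/3}). Let f_n be the indicator that G(n,p) contains a cycle of length ℓ for some integer ℓ ∈ (a·n^{1/3}, b·n^{1/3}). If the noise levels ε = ε(n) ∈ (0,1) satisfy ε(n)·n^{1/3} → 0, then P(f_n(ω^{ε(n)}) ≠ f_n(ω)) → 0 as n → ∞; that is, (f_n) is noise stable w.r.t. ε(n). -/
/-!
If `f(ω) ≠ f(ω^ε)`, one of the two graphs has a cycle of length `ℓ < b n^{1/3}` that the other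
lacks, so some cycle of that length lies in the union of the two graphs and the two configurations
differ on one of its edges; rotating the cycle puts that edge first. For a fixed injective vertex
sequence this has probability at most `2ε (p(1+ε))^ℓ`, and a union bound over the at most `n^ℓ`
sequences gives `P(f(ω) ≠ f(ω^ε)) ≤ 2ε ∑_{ℓ ≤ b n^{1/3}} (np(1+ε))^ℓ`. At criticality
`np(1+ε) ≤ 1 + O(n^{-1/3} + ε)`, so every term is `O(1)` and the bound is `O(ε n^{1/3}) → 0`.
-/

open Finset Filter

namespace BooleanNoise

/-- The Boolean truth value of a proposition (classically). -/
noncomputable def bOf (P : Prop) : Bool := @decide P (Classical.propDecidable P)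

section Basic

variable {Λ : Type*} [Fintype Λ] [DecidableEq Λ]

/-- Bernoulli(`p`) weight of a single bit. -/
def bern (p : ℝ) : Bool → ℝ := fun b => if b then p else 1 - p

/-- Weight of a configuration under the product Bernoulli(`p`) measure. -/
def wt (p : ℝ) (ω : Λ → Bool) : ℝ := ∏ i, bern p (ω i)

/-- Probability of an event under the product Bernoulli(`p`) measure. -/
noncomputable def pr (p : ℝ) (A : Set (Λ → Bool)) : ℝ :=
  ∑ ω : Λ → Bool, A.indicator (wt p) ω

/-- Expectation of a real random variable under the product Bernoulli(`p`) measure. -/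
noncomputable def ev (p : ℝ) (X : (Λ → Bool) → ℝ) : ℝ :=
  ∑ ω : Λ → Bool, wt p ω * X ω

/-- Joint single-coordinate weight of `(ω i, (ω^ε) i)`: the coordinate is kept with
probability `1 - ε` and resampled as a fresh Bernoulli(`p`) bit with probability `ε`. -/
def cwt (p ε : ℝ) (x y : Bool) : ℝ :=
  bern p x * ((if y = x then 1 - ε else 0) + ε * bern p y)

/-- Joint weight of the pair `(ω, ω^ε)`. -/
def jwt (p ε : ℝ) (q : (Λ → Bool) × (Λ → Bool)) : ℝ :=
  ∏ i, cwt p ε (q.1 i) (q.2 i)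

/-- Probability of an event for the pair `(ω, ω^ε)`. -/
noncomputable def jpr (p ε : ℝ) (A : Set ((Λ → Bool) × (Λ → Bool))) : ℝ :=
  ∑ q : (Λ → Bool) × (Λ → Bool), A.indicator (jwt p ε) q

/-- Covariance of `f ω` and `f (ω^ε)`. -/
noncomputable def cov (p ε : ℝ) (f : (Λ → Bool) → Bool) : ℝ :=
  jpr p ε {q | f q.1 = true ∧ f q.2 = true}
    - jpr p ε {q | f q.1 = true} * jpr p ε {q | f q.2 = true}

/-- `P(f ω ≠ f (ω^ε))`. -/
noncomputable def disagree (p ε : ℝ) (f : (Λ → Bool) → Bool) : ℝ :=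
  jpr p ε {q | f q.1 ≠ f q.2}

/-- `f` is monotone increasing (with respect to the coordinatewise order `false < true`). -/
def MonotoneBool (f : (Λ → Bool) → Bool) : Prop :=
  ∀ ⦃ω ω' : Λ → Bool⦄, ω ≤ ω' → f ω ≤ f ω'

/-- `W` forces `f = 1`: any configuration that is all ones on `W` has `f`-value `true`. -/
def ForcesOne (f : (Λ → Bool) → Bool) (W : Finset Λ) : Prop :=
  ∀ ω : Λ → Bool, (∀ i ∈ W, ω i = true) → f ω = true

/-- `W` is a 1-witness for `f`: a minimal set forcing `f = 1`. -/
def IsOneWitness (f : (Λ → Bool) → Bool) (W : Finset Λ) : Prop :=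
  ForcesOne f W ∧ ∀ W' ⊆ W, ForcesOne f W' → W' = W

/-- `W` forces `f = 0`: any configuration that is all zeros on `W` has `f`-value `false`. -/
def ForcesZero (f : (Λ → Bool) → Bool) (W : Finset Λ) : Prop :=
  ∀ ω : Λ → Bool, (∀ i ∈ W, ω i = false) → f ω = false

/-- `W` is a 0-witness for `f`: a minimal set forcing `f = 0`. -/
def IsZeroWitness (f : (Λ → Bool) → Bool) (W : Finset Λ) : Prop :=
  ForcesZero f W ∧ ∀ W' ⊆ W, ForcesZero f W' → W' = W

/-- `P(f(ω^ε) = 1 ∣ ω ≡ 1 on W)`. -/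
noncomputable def prNoisyOneGivenOnes (p ε : ℝ) (f : (Λ → Bool) → Bool) (W : Finset Λ) : ℝ :=
  jpr p ε {q | f q.2 = true ∧ ∀ i ∈ W, q.1 i = true}
    / jpr p ε {q | ∀ i ∈ W, q.1 i = true}

/-- `P(f(ω^ε) = 0 ∣ ω ≡ 0 on W)`. -/
noncomputable def prNoisyZeroGivenZeros (p ε : ℝ) (f : (Λ → Bool) → Bool) (W : Finset Λ) : ℝ :=
  jpr p ε {q | f q.2 = false ∧ ∀ i ∈ W, q.1 i = false}
    / jpr p ε {q | ∀ i ∈ W, q.1 i = false}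

/-- `P(f(ω^ε) = 1 ∣ f(ω) = 1)`. -/
noncomputable def prNoisyOneGivenOne (p ε : ℝ) (f : (Λ → Bool) → Bool) : ℝ :=
  jpr p ε {q | f q.2 = true ∧ f q.1 = true} / jpr p ε {q | f q.1 = true}

/-- `max_{W ∈ W₁(f)} [P(f(ω^ε)=1 ∣ ω ≡ 1 on W) − P(f=1)]`. -/
noncomputable def oneSNSgap (p ε : ℝ) (f : (Λ → Bool) → Bool) : ℝ :=
  ⨆ W : {W : Finset Λ // IsOneWitness f W},
    (prNoisyOneGivenOnes p ε f W.1 - pr p {ω | f ω = true})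

/-- `max_{W ∈ W₀(f)} [P(f(ω^ε)=0 ∣ ω ≡ 0 on W) − P(f=0)]`. -/
noncomputable def zeroSNSgap (p ε : ℝ) (f : (Λ → Bool) → Bool) : ℝ :=
  ⨆ W : {W : Finset Λ // IsZeroWitness f W},
    (prNoisyZeroGivenZeros p ε f W.1 - pr p {ω | f ω = false})

end Basic

/-- A sequence of Boolean functions is non-degenerate if `P(fₙ = 1)` stays bounded
away from `0` and from `1`. -/
def Nondeg {Λ : ℕ → Type*} [∀ n, Fintype (Λ n)] [∀ n, DecidableEq (Λ n)]
    (p : ℕ → ℝ) (f : ∀ n, (Λ n → Bool) → Bool) : Prop :=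
  ∃ c : ℝ, 0 < c ∧ ∀ᶠ n : ℕ in atTop,
    c ≤ pr (p n) {ω | f n ω = true} ∧ pr (p n) {ω | f n ω = true} ≤ 1 - c

section Graphs

/-- The index set of the `n.choose 2` potential edges of a graph on `Fin n`. -/
abbrev EdgeIdx (n : ℕ) := {e : Fin n × Fin n // e.1 < e.2}

/-- The graph on `Fin n` determined by an edge configuration. -/
def graphOf {n : ℕ} (ω : EdgeIdx n → Bool) : SimpleGraph (Fin n) where
  Adj i j := ∃ e : EdgeIdx n, ω e = true ∧
    ((e.1.1 = i ∧ e.1.2 = j) ∨ (e.1.1 = j ∧ e.1.2 = i))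
  symm := by
    constructor
    rintro i j ⟨e, he, h⟩
    exact ⟨e, he, h.symm⟩
  loopless := by
    constructor
    rintro i ⟨e, he, (⟨h1, h2⟩ | ⟨h1, h2⟩)⟩ <;>
      · have := e.2
        rw [h1, h2] at this
        exact lt_irrefl i this

/-- `G` contains a cycle of length `ℓ`. -/
def hasCycleOfLength {V : Type*} (G : SimpleGraph V) (ℓ : ℕ) : Prop :=
  ∃ (v : V) (c : G.Walk v v), c.IsCycle ∧ c.length = ℓ

/-- The minimum degree of `G` is at least `k`. -/
def minDegreeAtLeast {V : Type*} (G : SimpleGraph V) (k : ℕ) : Prop :=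
  ∀ v : V, k ≤ (G.neighborSet v).ncard

/-- `G` contains a copy of `H`. -/
def containsCopy {V W : Type*} (G : SimpleGraph V) (H : SimpleGraph W) : Prop :=
  ∃ φ : H →g G, Function.Injective φ

/-- The number of copies of `H` in `G` (subgraphs of `G` isomorphic to `H`). -/
noncomputable def copyCount {V W : Type*} (G : SimpleGraph V) (H : SimpleGraph W) : ℕ :=
  Nat.card {G' : G.Subgraph // Nonempty (G'.coe ≃g H)}

/-- A graph is strictly balanced if every proper subgraph with at least one vertex has a
strictly smaller average degree, i.e. edge/vertex ratio. -/
def StrictlyBalanced {V : Type*} [Fintype V] (H : SimpleGraph V) : Prop :=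
  ∀ H' : H.Subgraph, H' ≠ ⊤ → H'.verts.Nonempty →
    (H'.edgeSet.ncard : ℝ) / (H'.verts.ncard : ℝ)
      < (H.edgeSet.ncard : ℝ) / (Fintype.card V : ℝ)

end Graphs

end BooleanNoise

namespace BooleanNoise

/-- Indicator that the graph encoded by `ω` contains a cycle of length `ℓ` for some integer
`ℓ ∈ (a·n^{1/3}, b·n^{1/3})`. -/
noncomputable def cycleInd (a b : ℝ) (n : ℕ) (ω : EdgeIdx n → Bool) : Bool :=
  bOf (∃ ℓ : ℕ, a * (n : ℝ) ^ ((1 : ℝ)/3) < (ℓ : ℝ) ∧ (ℓ : ℝ) < b * (n : ℝ) ^ ((1 : ℝ)/3) ∧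
    hasCycleOfLength (graphOf ω) ℓ)

section JointLaw

variable {Λ : Type*} [Fintype Λ] {p ε : ℝ}

lemma bern_nonneg (hp : p ∈ Set.Icc 0 1) (x : Bool) : 0 ≤ bern p x := by
  cases x <;> simp [bern, hp.1, hp.2]

lemma cwt_nonneg (hp : p ∈ Set.Icc 0 1) (hε : ε ∈ Set.Icc 0 1) (x y : Bool) :
    0 ≤ cwt p ε x y := by
  have hkeep : 0 ≤ (if y = x then 1 - ε else 0) := by split_ifs <;> linarith [hε.2]
  exact mul_nonneg (bern_nonneg hp x) (add_nonneg hkeep (mul_nonneg hε.1 (bern_nonneg hp y)))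

lemma jwt_nonneg (hp : p ∈ Set.Icc 0 1) (hε : ε ∈ Set.Icc 0 1) (q : (Λ → Bool) × (Λ → Bool)) :
    0 ≤ jwt p ε q :=
  prod_nonneg fun _ _ => cwt_nonneg hp hε _ _

variable [DecidableEq Λ]

lemma jpr_nonneg (hp : p ∈ Set.Icc 0 1) (hε : ε ∈ Set.Icc 0 1)
    (A : Set ((Λ → Bool) × (Λ → Bool))) : 0 ≤ jpr p ε A :=
  sum_nonneg fun q _ => Set.indicator_nonneg (fun q _ => jwt_nonneg hp hε q) q

lemma jpr_mono (hp : p ∈ Set.Icc 0 1) (hε : ε ∈ Set.Icc 0 1)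
    {A B : Set ((Λ → Bool) × (Λ → Bool))} (h : A ⊆ B) : jpr p ε A ≤ jpr p ε B :=
  sum_le_sum fun q _ => Set.indicator_le_indicator_of_subset h (jwt_nonneg hp hε) q

lemma jpr_le_sum_of_subset_biUnion (hp : p ∈ Set.Icc 0 1) (hε : ε ∈ Set.Icc 0 1)
    {ι : Type*} (s : Finset ι) {A : Set ((Λ → Bool) × (Λ → Bool))}
    (B : ι → Set ((Λ → Bool) × (Λ → Bool))) (h : A ⊆ ⋃ i ∈ s, B i) :
    jpr p ε A ≤ ∑ i ∈ s, jpr p ε (B i) := by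
  simp only [jpr]
  rw [sum_comm]
  refine sum_le_sum fun q _ => ?_
  have hB : ∀ i ∈ s, 0 ≤ (B i).indicator (jwt p ε) q :=
    fun i _ => Set.indicator_nonneg (fun q _ => jwt_nonneg hp hε q) q
  by_cases hq : q ∈ A
  · obtain ⟨i, hi, hqi⟩ := Set.mem_iUnion₂.mp (h hq)
    rw [Set.indicator_of_mem hq, ← Set.indicator_of_mem hqi (jwt p ε)]
    exact single_le_sum hB hi
  · rw [Set.indicator_of_notMem hq]
    exact sum_nonneg hB

lemma jpr_setOf_forall (P : Λ → Bool → Bool → Prop) [∀ i x y, Decidable (P i x y)] :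
    jpr p ε {q | ∀ i, P i (q.1 i) (q.2 i)}
      = ∏ i, ∑ z : Bool × Bool, if P i z.1 z.2 then cwt p ε z.1 z.2 else 0 := by
  rw [Fintype.prod_sum, jpr,
    ← (Equiv.arrowProdEquivProdArrow Λ (fun _ => Bool) (fun _ => Bool)).sum_comp]
  refine sum_congr rfl fun x _ => ?_
  rw [Set.indicator_apply, Fintype.prod_ite_zero]
  rfl

/-- Under the joint law each coordinate of the pair is present in `ω` or in `ω^ε` with probability
`p + ε p (1 - p) ≤ p (1 + ε)`, and differs between them with probability `2 ε p (1 - p)`. -/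
lemma jpr_cover_flip_le (hp : p ∈ Set.Icc 0 1) (hε : ε ∈ Set.Icc 0 1) {T : Finset Λ} {e₀ : Λ}
    (he₀ : e₀ ∈ T) :
    jpr p ε {q | (∀ e ∈ T, (q.1 e || q.2 e) = true) ∧ q.1 e₀ ≠ q.2 e₀}
      ≤ 2 * ε * (p * (1 + ε)) ^ #T := by
  obtain ⟨hp0, hp1⟩ := hp
  obtain ⟨hε0, hε1⟩ := hε
  have hevent : {q : (Λ → Bool) × (Λ → Bool) | (∀ e ∈ T, (q.1 e || q.2 e) = true) ∧ q.1 e₀ ≠ q.2 e₀}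
      = {q | ∀ e, (e ∈ T → (q.1 e || q.2 e) = true) ∧ (e = e₀ → q.1 e ≠ q.2 e)} := by
    ext q
    simp only [Set.mem_ofPred_eq, forall_and, forall_eq]
  rw [hevent, jpr_setOf_forall fun e x y => (e ∈ T → (x || y) = true) ∧ (e = e₀ → x ≠ y)]
  calc _ ≤ ∏ e, (if e = e₀ then 2 * ε else 1) * (if e ∈ T then p * (1 + ε) else 1) := by
        refine prod_le_prod (fun e _ => sum_nonneg fun z _ => ?_) (fun e _ => ?_)
        · split_ifs
          exacts [cwt_nonneg ⟨hp0, hp1⟩ ⟨hε0, hε1⟩ _ _, le_rfl]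
        by_cases h₀ : e = e₀
        · subst h₀
          simp +decide only [Fintype.sum_prod_type, Fintype.sum_bool, he₀, true_implies, cwt, bern,
            if_true, if_false]
          nlinarith [mul_nonneg hε0 hp0, mul_nonneg (mul_nonneg hε0 hp0) hε0]
        by_cases hT : e ∈ T
        · simp +decide only [Fintype.sum_prod_type, Fintype.sum_bool, hT, h₀, true_implies,
            false_implies, and_true, cwt, bern, if_true, if_false, one_mul]
          nlinarith [mul_nonneg hε0 hp0, mul_nonneg (mul_nonneg hε0 hp0) hp0]
        · simp +decide only [Fintype.sum_prod_type, Fintype.sum_bool, hT, h₀, false_implies,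
            and_true, if_true, if_false, cwt, bern, mul_one]
          linarith
    _ = 2 * ε * (p * (1 + ε)) ^ #T := by
        rw [prod_mul_distrib, Fintype.prod_ite_eq', prod_ite_mem, univ_inter, prod_const]

end JointLaw

section Cycles

open SimpleGraph Function

variable {n : ℕ}

def EdgeIdx.toSym2 (e : EdgeIdx n) : Sym2 (Fin n) := s(e.1.1, e.1.2)

lemma EdgeIdx.toSym2_injective : Injective (EdgeIdx.toSym2 (n := n)) := by
  rintro ⟨⟨a, b⟩, hab⟩ ⟨⟨c, d⟩, hcd⟩ h
  rcases Sym2.eq_iff.mp h with ⟨rfl, rfl⟩ | ⟨rfl, rfl⟩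
  · rfl
  · exact absurd (hab.trans hcd) (lt_irrefl _)

lemma EdgeIdx.exists_toSym2_eq {u w : Fin n} (h : u ≠ w) :
    ∃ e : EdgeIdx n, e.toSym2 = s(u, w) := by
  rcases h.lt_or_gt with h | h
  · exact ⟨⟨(u, w), h⟩, rfl⟩
  · exact ⟨⟨(w, u), h⟩, Sym2.eq_swap⟩

lemma graphOf_adj_iff {ω : EdgeIdx n → Bool} {u w : Fin n} :
    (graphOf ω).Adj u w ↔ ∃ e, ω e = true ∧ e.toSym2 = s(u, w) := by
  simp [graphOf, EdgeIdx.toSym2]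

lemma hasCycleOfLength.three_le {V : Type*} {G : SimpleGraph V} {ℓ : ℕ}
    (h : hasCycleOfLength G ℓ) : 3 ≤ ℓ := by
  obtain ⟨_, c, hc, rfl⟩ := h
  exact hc.three_le_length

variable {ℓ : ℕ} [NeZero ℓ]

lemma Fin.add_one_ne_self (hℓ : 2 ≤ ℓ) (i : Fin ℓ) : i + 1 ≠ i := by
  rw [Ne, add_eq_left, Fin.ext_iff, Fin.val_one', Fin.val_zero, Nat.one_mod_eq_one.mpr (by omega)]
  omega

lemma Fin.add_one_add_one_ne_self (hℓ : 3 ≤ ℓ) (i : Fin ℓ) : i + 1 + 1 ≠ i := by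
  rw [add_assoc, Ne, add_eq_left, Fin.ext_iff, Fin.val_add, Fin.val_one', Fin.val_zero,
    Nat.one_mod_eq_one.mpr (by omega), Nat.mod_eq_of_lt (by omega)]
  omega

def cycleEdges (v : Fin ℓ → Fin n) : Finset (EdgeIdx n) :=
  {e | ∃ i, e.toSym2 = s(v i, v (i + 1))}

lemma card_cycleEdges (hℓ : 3 ≤ ℓ) {v : Fin ℓ → Fin n} (hv : Injective v) :
    #(cycleEdges v) = ℓ := by
  have hedge : Injective fun i => s(v i, v (i + 1)) := by
    intro i j h
    rcases Sym2.eq_iff.mp h with ⟨hij, -⟩ | ⟨hij, hji⟩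
    · exact hv hij
    · obtain rfl := hv hij
      exact absurd (hv hji) (Fin.add_one_add_one_ne_self hℓ j)
  have himage : (cycleEdges v).image EdgeIdx.toSym2 = univ.image fun i => s(v i, v (i + 1)) := by
    ext d
    simp only [cycleEdges, mem_image, mem_filter, mem_univ, true_and]
    constructor
    · rintro ⟨e, ⟨i, hi⟩, rfl⟩
      exact ⟨i, hi.symm⟩
    · rintro ⟨i, rfl⟩
      obtain ⟨e, he⟩ := EdgeIdx.exists_toSym2_eq (hv.ne (Fin.add_one_ne_self (by omega) i).symm)
      exact ⟨e, ⟨i, he⟩, he⟩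
  rw [← card_image_of_injective _ EdgeIdx.toSym2_injective, himage,
    card_image_of_injective _ hedge, card_univ, Fintype.card_fin]

/-- Anchoring the differing edge at `{v 0, v 1}`, rather than anywhere on the cycle, saves a
factor `ℓ` in the union bound over `v`. -/
def cycleFlipEvent (v : Fin ℓ → Fin n) : Set ((EdgeIdx n → Bool) × (EdgeIdx n → Bool)) :=
  {q | (∀ e ∈ cycleEdges v, (q.1 e || q.2 e) = true) ∧
    ∃ e : EdgeIdx n, e.toSym2 = s(v 0, v 1) ∧ q.1 e ≠ q.2 e}

lemma swap_mem_cycleFlipEvent {v : Fin ℓ → Fin n} {q : (EdgeIdx n → Bool) × (EdgeIdx n → Bool)}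
    (h : q ∈ cycleFlipEvent v) : q.swap ∈ cycleFlipEvent v := by
  obtain ⟨hcover, e, he, hne⟩ := h
  exact ⟨fun e' he' => (Bool.or_comm _ _).trans (hcover e' he'), e, he, hne.symm⟩

lemma jpr_cycleFlipEvent_le {p ε : ℝ} (hp : p ∈ Set.Icc 0 1) (hε : ε ∈ Set.Icc 0 1)
    (hℓ : 3 ≤ ℓ) {v : Fin ℓ → Fin n} (hv : Injective v) :
    jpr p ε (cycleFlipEvent v) ≤ 2 * ε * (p * (1 + ε)) ^ ℓ := by
  obtain ⟨e₀, he₀⟩ := EdgeIdx.exists_toSym2_eq (hv.ne (Fin.add_one_ne_self (by omega) 0).symm)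
  rw [zero_add] at he₀
  have he₀_mem : e₀ ∈ cycleEdges v := mem_filter.mpr ⟨mem_univ _, 0, by rw [he₀, zero_add]⟩
  refine (jpr_mono hp hε ?_).trans
    ((jpr_cover_flip_le hp hε he₀_mem).trans_eq (by rw [card_cycleEdges hℓ hv]))
  rintro q ⟨hcover, e, he, hne⟩
  exact ⟨hcover, EdgeIdx.toSym2_injective (he.trans he₀.symm) ▸ hne⟩

lemma exists_mem_cycleFlipEvent {ω τ : EdgeIdx n → Bool} (hω : hasCycleOfLength (graphOf ω) ℓ)
    (hτ : ¬ hasCycleOfLength (graphOf τ) ℓ) :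
    ∃ v : Fin ℓ → Fin n, Injective v ∧ (ω, τ) ∈ cycleFlipEvent v := by
  obtain ⟨x, c, hc, rfl⟩ := hω
  let w : Fin c.length → Fin n := fun i => c.getVert i
  have hw : Injective w := fun i j h => Fin.ext <|
    hc.getVert_injOn' (show (i : ℕ) ≤ c.length - 1 by omega)
      (show (j : ℕ) ≤ c.length - 1 by omega) h
  have hw_succ : ∀ i, w (i + 1) = c.getVert (i + 1) := by
    intro i
    change c.getVert (i + 1 : Fin c.length) = _
    rw [Fin.val_add, Fin.val_one', Nat.add_mod_mod]
    rcases Nat.lt_or_ge (i + 1) c.length with h | h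
    · rw [Nat.mod_eq_of_lt h]
    · rw [show (i : ℕ) + 1 = c.length by omega, Nat.mod_self, c.getVert_zero, c.getVert_length]
  have hadj : ∀ i, (graphOf ω).Adj (w i) (w (i + 1)) := fun i => by
    rw [hw_succ]
    exact c.adj_getVert_succ i.2
  obtain ⟨i₀, hi₀⟩ : ∃ i, ¬ (graphOf τ).Adj (w i) (w (i + 1)) := by
    by_contra! hall
    refine hτ ⟨x, c.transfer _ fun d hd => ?_, hc.transfer _, c.length_transfer _⟩
    induction d using Sym2.ind with | _ y z => ?_
    obtain ⟨i, hi, hyz⟩ := c.mk_mem_edges_iff_exists.mp hd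
    rw [← hyz, mem_edgeSet, ← hw_succ ⟨i, hi⟩]
    exact hall ⟨i, hi⟩
  refine ⟨fun j => w (i₀ + j), hw.comp (add_right_injective i₀), ?_, ?_⟩
  · intro e he
    obtain ⟨j, hj⟩ := (mem_filter.mp he).2
    obtain ⟨e', he', hj'⟩ := graphOf_adj_iff.mp (hadj (i₀ + j))
    dsimp only at hj
    rw [← add_assoc] at hj
    rw [EdgeIdx.toSym2_injective (hj.trans hj'.symm)]
    exact Bool.or_eq_true_iff.mpr (Or.inl he')
  · obtain ⟨e, he, hi₀e⟩ := graphOf_adj_iff.mp (hadj i₀)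
    refine ⟨e, by simp only [hi₀e, add_zero], fun hωτ => hi₀ ?_⟩
    exact graphOf_adj_iff.mpr ⟨e, (hωτ : ω e = τ e).symm.trans he, hi₀e⟩

end Cycles

section NoiseStability

open Real Function

lemma exists_mem_cycleFlipEvent_of_cycleInd {a b : ℝ} {n : ℕ} {ω τ : EdgeIdx n → Bool}
    (hω : cycleInd a b n ω = true) (hτ : cycleInd a b n τ = false) :
    ∃ k ∈ Ico 2 ⌊b * (n : ℝ) ^ ((1 : ℝ)/3)⌋₊, ∃ v : Fin (k + 1) → Fin n,
      Injective v ∧ (ω, τ) ∈ cycleFlipEvent v := by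
  simp only [cycleInd, bOf, decide_eq_true_eq, decide_eq_false_iff_not] at hω hτ
  obtain ⟨ℓ, haℓ, hℓb, hcycle⟩ := hω
  have h3 := hcycle.three_le
  obtain ⟨k, rfl⟩ : ∃ k, ℓ = k + 1 := ⟨ℓ - 1, by omega⟩
  refine ⟨k, mem_Ico.mpr ⟨by omega, Nat.le_floor (by exact_mod_cast hℓb.le)⟩,
    exists_mem_cycleFlipEvent hcycle fun h => hτ ⟨k + 1, haℓ, hℓb, h⟩⟩

lemma disagree_cycleInd_le {p ε : ℝ} (hp : p ∈ Set.Icc 0 1) (hε : ε ∈ Set.Icc 0 1)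
    (a b : ℝ) (n : ℕ) :
    disagree p ε (cycleInd a b n)
      ≤ 2 * ε * ∑ k ∈ range ⌊b * (n : ℝ) ^ ((1 : ℝ)/3)⌋₊, ((n : ℝ) * (p * (1 + ε))) ^ (k + 1) := by
  set L := ⌊b * (n : ℝ) ^ ((1 : ℝ)/3)⌋₊
  let S := (Ico 2 L).sigma fun k => ({v | Injective v} : Finset (Fin (k + 1) → Fin n))
  have hcover : {q | cycleInd a b n q.1 ≠ cycleInd a b n q.2}
      ⊆ ⋃ t ∈ S, cycleFlipEvent t.2 := by
    have key : ∀ ω τ, cycleInd a b n ω = true → cycleInd a b n τ = false →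
        ∃ t ∈ S, (ω, τ) ∈ cycleFlipEvent t.2 := fun ω τ hω hτ => by
      obtain ⟨k, hk, v, hv, hflip⟩ := exists_mem_cycleFlipEvent_of_cycleInd hω hτ
      exact ⟨⟨k, v⟩, mem_sigma.mpr ⟨hk, by simpa using hv⟩, hflip⟩
    rintro ⟨ω, τ⟩ hq
    rw [Set.mem_iUnion₂]
    cases hω : cycleInd a b n ω <;> cases hτ : cycleInd a b n τ
    · exact absurd (hω.trans hτ.symm) hq
    · obtain ⟨t, ht, hflip⟩ := key τ ω hτ hω
      exact ⟨t, ht, swap_mem_cycleFlipEvent hflip⟩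
    · obtain ⟨t, ht, hflip⟩ := key ω τ hω hτ
      exact ⟨t, ht, hflip⟩
    · exact absurd (hω.trans hτ.symm) hq
  have hinj : ∀ k, (#({v | Injective v} : Finset (Fin (k + 1) → Fin n)) : ℝ) ≤ (n : ℝ) ^ (k + 1) :=
    fun k => by exact_mod_cast (card_filter_le _ _).trans (by simp)
  calc disagree p ε (cycleInd a b n)
      ≤ ∑ t ∈ S, jpr p ε (cycleFlipEvent t.2) := jpr_le_sum_of_subset_biUnion hp hε S _ hcover
    _ ≤ ∑ t ∈ S, 2 * ε * (p * (1 + ε)) ^ (t.1 + 1) := sum_le_sum fun t ht => by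
        obtain ⟨hk, hv⟩ := mem_sigma.mp ht
        exact jpr_cycleFlipEvent_le hp hε (by simp only [mem_Ico] at hk; omega) (by simpa using hv)
    _ ≤ ∑ k ∈ Ico 2 L, (n : ℝ) ^ (k + 1) * (2 * ε * (p * (1 + ε)) ^ (k + 1)) := by
        rw [sum_sigma]
        refine sum_le_sum fun k _ => ?_
        dsimp only
        rw [sum_const, nsmul_eq_mul]
        exact mul_le_mul_of_nonneg_right (hinj k) (by have := hp.1; have := hε.1; positivity)
    _ ≤ ∑ k ∈ range L, (n : ℝ) ^ (k + 1) * (2 * ε * (p * (1 + ε)) ^ (k + 1)) :=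
        sum_le_sum_of_subset_of_nonneg
          (fun k hk => by simp only [mem_Ico, mem_range] at hk ⊢; omega)
          fun k _ _ => by have := hp.1; have := hε.1; positivity
    _ = 2 * ε * ∑ k ∈ range L, ((n : ℝ) * (p * (1 + ε))) ^ (k + 1) := by
        rw [mul_sum]
        exact sum_congr rfl fun k _ => by rw [mul_pow (n : ℝ)]; ring

lemma sum_range_pow_succ_le_mul_exp {x δ B : ℝ} (hx : 0 ≤ x) (hxδ : x ≤ 1 + δ) (hδ : 0 ≤ δ)
    (hB : 0 ≤ B) : ∑ k ∈ range ⌊B⌋₊, x ^ (k + 1) ≤ B * exp (δ * B) := by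
  have hterm : ∀ k ∈ range ⌊B⌋₊, x ^ (k + 1) ≤ exp (δ * B) := by
    intro k hk
    have hkB : ((k + 1 : ℕ) : ℝ) ≤ B := (Nat.cast_le.mpr (mem_range.mp hk)).trans (Nat.floor_le hB)
    calc x ^ (k + 1) ≤ (1 + δ) ^ (k + 1) := pow_le_pow_left₀ hx hxδ _
      _ ≤ exp δ ^ (k + 1) := pow_le_pow_left₀ (by linarith) (by linarith [add_one_le_exp δ]) _
      _ = exp (δ * (k + 1 : ℕ)) := by rw [← exp_nat_mul, mul_comm]
      _ ≤ exp (δ * B) := exp_le_exp.mpr (mul_le_mul_of_nonneg_left hkB hδ)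
  calc ∑ k ∈ range ⌊B⌋₊, x ^ (k + 1) ≤ #(range ⌊B⌋₊) • exp (δ * B) := sum_le_card_nsmul _ _ _ hterm
    _ = ⌊B⌋₊ * exp (δ * B) := by rw [card_range, nsmul_eq_mul]
    _ ≤ B * exp (δ * B) := mul_le_mul_of_nonneg_right (Nat.floor_le hB) (exp_pos _).le

lemma disagree_cycleInd_le_of_critical {p ε a b C : ℝ} {n : ℕ} (hp : p ∈ Set.Icc 0 1)
    (hε : ε ∈ Set.Icc 0 1) (hb : 0 ≤ b) (hn : 0 < n)
    (hcrit : |(n : ℝ) * p - 1| ≤ C * (n : ℝ) ^ (-(1 : ℝ)/3))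
    (hC : C * (n : ℝ) ^ (-(1 : ℝ)/3) ≤ 1) (hεn : ε * (n : ℝ) ^ ((1 : ℝ)/3) ≤ 1) :
    disagree p ε (cycleInd a b n) ≤ 2 * b * exp (C * b + 2 * b) * (ε * (n : ℝ) ^ ((1 : ℝ)/3)) := by
  set N := (n : ℝ) ^ ((1 : ℝ)/3)
  set γ := C * (n : ℝ) ^ (-(1 : ℝ)/3)
  have hγN : γ * N = C := by
    rw [mul_assoc, ← rpow_add (Nat.cast_pos.mpr hn)]
    norm_num
  have hγ : 0 ≤ γ := (abs_nonneg _).trans hcrit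
  have hN : 0 ≤ N := rpow_nonneg n.cast_nonneg _
  have hx0 : 0 ≤ (n : ℝ) * (p * (1 + ε)) := by have := hp.1; have := hε.1; positivity
  have hnp : (n : ℝ) * p ≤ 1 + γ := by linarith [le_abs_self ((n : ℝ) * p - 1)]
  have hx : (n : ℝ) * (p * (1 + ε)) ≤ 1 + (γ + 2 * ε) := by
    nlinarith [mul_le_mul_of_nonneg_right hnp hε.1, mul_le_mul_of_nonneg_right hC hε.1]
  have hexp : (γ + 2 * ε) * (b * N) ≤ C * b + 2 * b := by
    nlinarith [mul_le_mul_of_nonneg_left hεn hb]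
  calc disagree p ε (cycleInd a b n)
      ≤ 2 * ε * ((b * N) * exp ((γ + 2 * ε) * (b * N))) :=
        (disagree_cycleInd_le hp hε a b n).trans (mul_le_mul_of_nonneg_left
          (sum_range_pow_succ_le_mul_exp hx0 hx (by linarith [hε.1])
            (mul_nonneg hb hN)) (by linarith [hε.1]))
    _ ≤ 2 * ε * ((b * N) * exp (C * b + 2 * b)) := mul_le_mul_of_nonneg_left
        (mul_le_mul_of_nonneg_left (exp_le_exp.mpr hexp) (mul_nonneg hb hN)) (by linarith [hε.1])
    _ = 2 * b * exp (C * b + 2 * b) * (ε * N) := by ring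

end NoiseStability

/-- At criticality `n·p = 1 + O(n^{-1/3})`, if `ε(n)·n^{1/3} → 0` then the
property of containing a cycle of length in `(a n^{1/3}, b n^{1/3})` is noise stable w.r.t.
`ε(n)`: the probability that `f_n(ω^{ε(n)}) ≠ f_n(ω)` tends to `0`. -/
theorem stmt1 (a b : ℝ) (ha : 0 < a) (hab : a < b)
    (p : ℕ → ℝ) (hp : ∀ n, p n ∈ Set.Ioo (0 : ℝ) 1)
    (hcrit : ∃ C : ℝ, ∀ᶠ n : ℕ in atTop,
      |(n : ℝ) * p n - 1| ≤ C * (n : ℝ) ^ (-(1 : ℝ)/3))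
    (ε : ℕ → ℝ) (hε : ∀ n, ε n ∈ Set.Ioo (0 : ℝ) 1)
    (hsmall : Tendsto (fun n => ε n * (n : ℝ) ^ ((1 : ℝ)/3)) atTop (nhds 0)) :
    Tendsto (fun n => disagree (p n) (ε n) (cycleInd a b n)) atTop (nhds 0) := by
  obtain ⟨C, hC⟩ := hcrit
  have hp' n := Set.Ioo_subset_Icc_self (hp n)
  have hε' n := Set.Ioo_subset_Icc_self (hε n)
  have hwindow : Tendsto (fun n : ℕ => C * (n : ℝ) ^ (-(1 : ℝ)/3)) atTop (nhds 0) := by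
    simpa [neg_div] using ((tendsto_rpow_neg_atTop (by norm_num : (0 : ℝ) < 1/3)).comp
      tendsto_natCast_atTop_atTop).const_mul C
  refine squeeze_zero' (Eventually.of_forall fun n => jpr_nonneg (hp' n) (hε' n) _) ?_
    (by simpa only [mul_zero] using hsmall.const_mul (2 * b * Real.exp (C * b + 2 * b)))
  filter_upwards [hC, hwindow.eventually (eventually_le_nhds one_pos),
    hsmall.eventually (eventually_le_nhds one_pos), eventually_gt_atTop 0] with n hcrit hC1 hε1 hn
  exact disagree_cycleInd_le_of_critical (hp' n) (hε' n) (ha.trans hab).le hn hcrit hC1 hε1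

end BooleanNoise
end

section
/- Let f_n be the recursive 5-majority function on n = 5^k variables with p = 1/2 (variables are indexed by the leaves of the complete rooted 5-ary tree of depth k; each internal node is assigned the majority value of its 5 children, and f_n is the value assigned to the root). Then for every fixed ε ∈ (0,1), lim_{k→∞} inf_{W ∈ W_1(f_n)} P(f_n(ω^ε)=1 | ω ≡ 1 on W) = 1. -/
/-!
Conditioned on `ω ≡ 1` on `W`, the bits of `ω^ε` are independent, equal to `1` with probability
`1 - ε/2` on `W` and `1/2` off `W`. A 1-witness of the depth-`(k+1)` function consists of
1-witnesses of exactly three of the five subtrees and nothing in the other two, whose values are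
then fair bits by self-duality. If each of the three subtrees fails with probability `d ≤ ε/2`,
the root fails with probability `d (3 + 3d - 2d²) / 4 ≤ r d`, where `r = (3 + 3ε/2 - ε²/2) / 4 < 1`;
so at depth `k` the failure probability is at most `(ε/2) r^k`.
-/

open Finset Filter

namespace BooleanNoise

/-- Majority of 5 bits. -/
def maj5 (b : Fin 5 → Bool) : Bool :=
  decide (3 ≤ (Finset.univ.filter fun i => b i = true).card)

/-- The recursive 5-majority function on `5^k` variables (the leaves of the complete
rooted 5-ary tree of depth `k`): each internal node takes the majority value of its
5 children, and the output is the value at the root. -/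
def recMaj5 : (k : ℕ) → (Fin (5 ^ k) → Bool) → Bool
  | 0, ω => ω ⟨0, by norm_num⟩
  | k + 1, ω => maj5 fun j => recMaj5 k fun i =>
      ω ⟨j.val * 5 ^ k + i.val, by
        have hj : j.val + 1 ≤ 5 := j.isLt
        have hi : i.val < 5 ^ k := i.isLt
        calc j.val * 5 ^ k + i.val < j.val * 5 ^ k + 5 ^ k := by omega
          _ = (j.val + 1) * 5 ^ k := by ring
          _ ≤ 5 * 5 ^ k := Nat.mul_le_mul_right _ hj
          _ = 5 ^ (k + 1) := by ring⟩

section ProductMeasure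

variable {Λ : Type*} [Fintype Λ] [DecidableEq Λ]

noncomputable def prodProb (ρ : Λ → ℝ) (f : (Λ → Bool) → Bool) : ℝ :=
  ∑ η : Λ → Bool, (∏ i, bern (ρ i) (η i)) * if f η then 1 else 0

lemma bern_nonneg_s14 {p : ℝ} (h0 : 0 ≤ p) (h1 : p ≤ 1) (b : Bool) : 0 ≤ bern p b := by
  cases b <;> simp [bern] <;> linarith

lemma sum_prod_bool (g : Λ → Bool → ℝ) :
    ∑ η : Λ → Bool, ∏ i, g i (η i) = ∏ i, (g i true + g i false) := by
  rw [← Fintype.piFinset_univ, ← Finset.prod_univ_sum]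
  simp

lemma sum_prod_bern (ρ : Λ → ℝ) : ∑ η : Λ → Bool, ∏ i, bern (ρ i) (η i) = 1 := by
  rw [sum_prod_bool]
  simp [bern]

lemma prodProb_true (ρ : Λ → ℝ) : prodProb ρ (fun _ => true) = 1 := by
  simp [prodProb, sum_prod_bern]

lemma prodProb_false (ρ : Λ → ℝ) : prodProb ρ (fun _ => false) = 0 := by
  simp [prodProb]

lemma prodProb_le_prodProb {ρ : Λ → ℝ} (h0 : 0 ≤ ρ) (h1 : ρ ≤ 1)
    {f g : (Λ → Bool) → Bool} (hfg : f ≤ g) : prodProb ρ f ≤ prodProb ρ g := by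
  refine Finset.sum_le_sum fun η _ => mul_le_mul_of_nonneg_left ?_ ?_
  · have := hfg η
    revert this
    cases f η <;> cases g η <;> simp
  · exact Finset.prod_nonneg fun i _ => bern_nonneg_s14 (h0 i) (h1 i) _

lemma prodProb_nonneg {ρ : Λ → ℝ} (h0 : 0 ≤ ρ) (h1 : ρ ≤ 1) (f : (Λ → Bool) → Bool) :
    0 ≤ prodProb ρ f :=
  prodProb_false ρ ▸ prodProb_le_prodProb h0 h1 fun _ => Bool.false_le _

lemma prodProb_le_one {ρ : Λ → ℝ} (h0 : 0 ≤ ρ) (h1 : ρ ≤ 1) (f : (Λ → Bool) → Bool) :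
    prodProb ρ f ≤ 1 :=
  prodProb_true ρ ▸ prodProb_le_prodProb h0 h1 fun _ => Bool.le_true _

lemma prodProb_eq_sum_filter (ρ : Λ → ℝ) (f : (Λ → Bool) → Bool) :
    prodProb ρ f = ∑ η ∈ univ.filter (fun η => f η = true), ∏ i, bern (ρ i) (η i) := by
  simp [prodProb, Finset.sum_filter]

lemma prodProb_reindex {Λ' : Type*} [Fintype Λ'] [DecidableEq Λ'] (e : Λ' ≃ Λ) (ρ : Λ → ℝ)
    (f : (Λ → Bool) → Bool) :
    prodProb ρ f = prodProb (ρ ∘ e) (fun η => f (η ∘ e.symm)) := by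
  refine Fintype.sum_equiv (e.arrowCongr (Equiv.refl Bool)).symm _ _ fun η => ?_
  congr 1
  · exact (Fintype.prod_equiv e _ _ fun i => by simp [Equiv.arrowCongr]).symm
  · simp [Equiv.arrowCongr, Function.comp_def]

lemma prodProb_fin_zero (ρ : Fin 0 → ℝ) (f : (Fin 0 → Bool) → Bool) :
    prodProb ρ f = if f Fin.elim0 then 1 else 0 := by
  simp [prodProb, Subsingleton.elim _ (Fin.elim0 : Fin 0 → Bool)]

lemma prodProb_fin_succ {n : ℕ} (ρ : Fin (n + 1) → ℝ) (f : (Fin (n + 1) → Bool) → Bool) :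
    prodProb ρ f = ρ 0 * prodProb (Fin.tail ρ) (fun η => f (Fin.cons true η))
      + (1 - ρ 0) * prodProb (Fin.tail ρ) (fun η => f (Fin.cons false η)) := by
  rw [prodProb, ← (Fin.consEquiv fun _ => Bool).sum_comp, Fintype.sum_prod_type,
    Fintype.sum_bool, prodProb, prodProb, Finset.mul_sum, Finset.mul_sum]
  congr 1 <;> refine Finset.sum_congr rfl fun η _ => ?_ <;>
    simp only [Fin.consEquiv, Equiv.coe_fn_mk, Fin.prod_univ_succ, Fin.cons_zero, Fin.cons_succ,
      Fin.tail, bern, if_true, Bool.false_eq_true, if_false, mul_assoc] <;> rfl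

lemma prodProb_fin_mono {n : ℕ} {ρ ρ' : Fin n → ℝ} {f : (Fin n → Bool) → Bool}
    (hf : Monotone f) (h0 : 0 ≤ ρ) (hρ : ρ ≤ ρ') (h1 : ρ' ≤ 1) :
    prodProb ρ f ≤ prodProb ρ' f := by
  induction n with
  | zero => simp [prodProb_fin_zero]
  | succ n ih =>
    have hcons (b : Bool) : Monotone fun η => f (Fin.cons b η) :=
      hf.comp fun η η' h => Fin.cons_le_cons.mpr ⟨le_rfl, h⟩
    have h0' : 0 ≤ Fin.tail ρ := fun i => h0 i.succ
    have h1' : Fin.tail ρ' ≤ 1 := fun i => h1 i.succ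
    have hρ' : Fin.tail ρ ≤ Fin.tail ρ' := fun i => hρ i.succ
    have hone := ih (hcons true) h0' hρ' h1'
    have hzero := ih (hcons false) h0' hρ' h1'
    have hzero_le_one : prodProb (Fin.tail ρ') (fun η => f (Fin.cons false η))
        ≤ prodProb (Fin.tail ρ') (fun η => f (Fin.cons true η)) :=
      prodProb_le_prodProb (h0'.trans hρ') h1' fun η =>
        hf (Fin.cons_le_cons.mpr ⟨Bool.false_le _, le_rfl⟩)
    have hρ₀ : 0 ≤ ρ 0 := h0 0
    have hρρ₀ : ρ 0 ≤ ρ' 0 := hρ 0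
    have hρ'₀ : ρ' 0 ≤ 1 := h1 0
    rw [prodProb_fin_succ, prodProb_fin_succ]
    nlinarith [mul_le_mul_of_nonneg_left hone hρ₀,
      mul_le_mul_of_nonneg_left hzero (by linarith : 0 ≤ 1 - ρ 0),
      mul_le_mul_of_nonneg_left hzero_le_one (by linarith : 0 ≤ ρ' 0 - ρ 0)]

theorem prodProb_mono {ρ ρ' : Λ → ℝ} {f : (Λ → Bool) → Bool}
    (hf : Monotone f) (h0 : 0 ≤ ρ) (hρ : ρ ≤ ρ') (h1 : ρ' ≤ 1) :
    prodProb ρ f ≤ prodProb ρ' f := by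
  let e := (Fintype.equivFin Λ).symm
  rw [prodProb_reindex e, prodProb_reindex e]
  exact prodProb_fin_mono (hf.comp fun η η' h i => h _) (fun i => h0 _) (fun i => hρ _)
    (fun i => h1 _)

lemma prodProb_coord (ρ : Λ → ℝ) (a : Λ) : prodProb ρ (fun η => η a) = ρ a := by
  have hfactor (η : Λ → Bool) : (∏ i, bern (ρ i) (η i)) * (if η a then 1 else 0)
      = ∏ i, bern (ρ i) (η i) * if i = a then (if η i then 1 else 0) else 1 := by
    rw [Finset.prod_mul_distrib, Finset.prod_ite_eq' univ a, if_pos (mem_univ a)]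
  simp only [prodProb, hfactor]
  rw [sum_prod_bool fun i b => bern (ρ i) b * if i = a then (if b then 1 else 0) else 1,
    Finset.prod_eq_single a (fun i _ hi => by simp [hi, bern]) (by simp)]
  simp [bern]

lemma prodProb_half_of_selfDual {f : (Λ → Bool) → Bool}
    (hf : ∀ η : Λ → Bool, f (fun i => !η i) = !f η) :
    prodProb (fun _ => 1 / 2) f = 1 / 2 := by
  have hbern (η : Λ → Bool) : ∏ i, bern (1 / 2) (η i) = (1 / 2 : ℝ) ^ Fintype.card Λ := by
    rw [← Finset.card_univ, ← Finset.prod_const]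
    exact Finset.prod_congr rfl fun i _ => by cases η i <;> norm_num [bern]
  have hflip : prodProb (fun _ => 1 / 2) f = prodProb (fun _ => 1 / 2) (fun η => !f η) := by
    refine Fintype.sum_equiv ⟨fun η i => !η i, fun η i => !η i, ?_, ?_⟩ _ _ fun η => ?_
    · intro η; simp
    · intro η; simp
    · simp only [Equiv.coe_fn_mk]
      rw [hbern, hbern]
      simp only [hf, Bool.not_not]
  have hsum : prodProb (fun _ => 1 / 2) f + prodProb (fun _ => 1 / 2) (fun η => !f η) = 1 := by
    rw [prodProb, prodProb, ← Finset.sum_add_distrib]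
    convert sum_prod_bern (fun _ : Λ => (1 / 2 : ℝ)) using 2 with η
    cases f η <;> simp
  linarith

lemma bern_prodProb (ρ : Λ → ℝ) (f : (Λ → Bool) → Bool) (c : Bool) :
    bern (prodProb ρ f) c = ∑ η ∈ univ.filter (fun η => f η = c), ∏ i, bern (ρ i) (η i) := by
  cases c
  · have hsplit := Finset.sum_filter_add_sum_filter_not univ (fun η => f η = true)
      fun η => ∏ i, bern (ρ i) (η i)
    simp only [sum_prod_bern, Bool.not_eq_true] at hsplit
    rw [bern, if_neg Bool.false_ne_true, prodProb_eq_sum_filter]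
    linarith
  · simp [bern, prodProb_eq_sum_filter]

theorem prodProb_blocks {J B : Type*} [Fintype J] [DecidableEq J] [Fintype B] [DecidableEq B]
    (ρ : J → B → ℝ) (F : J → (B → Bool) → Bool) (g : (J → Bool) → Bool) :
    prodProb (fun p : J × B => ρ p.1 p.2) (fun η => g fun j => F j fun b => η (j, b))
      = prodProb (fun j => prodProb (ρ j) (F j)) g := by
  have hcurry : prodProb (fun p : J × B => ρ p.1 p.2) (fun η => g fun j => F j fun b => η (j, b))
      = ∑ η : J → B → Bool, (∏ j, ∏ b, bern (ρ j b) (η j b))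
          * if g (fun j => F j (η j)) then 1 else 0 :=
    Fintype.sum_equiv (Equiv.curry J B Bool) _ _ fun η => by
      rw [Fintype.prod_prod_type]; rfl
  have hfibre (c : J → Bool) : ∏ j, bern (prodProb (ρ j) (F j)) (c j)
      = ∑ η ∈ univ.filter (fun η : J → B → Bool => (fun j => F j (η j)) = c),
          ∏ j, ∏ b, bern (ρ j b) (η j b) := by
    simp_rw [bern_prodProb, Finset.prod_univ_sum]
    refine Finset.sum_congr ?_ fun _ _ => rfl
    ext η
    simp [funext_iff]
  rw [hcurry, prodProb, ← Finset.sum_fiberwise univ (fun η : J → B → Bool => fun j => F j (η j))]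
  refine Finset.sum_congr rfl fun c _ => ?_
  rw [hfibre, Finset.sum_mul]
  refine Finset.sum_congr rfl fun η hη => ?_
  rw [(Finset.mem_filter.mp hη).2]

end ProductMeasure

section NoisyConditioning

variable {Λ : Type*} [DecidableEq Λ]

/-- Given `ω ≡ 1` on `W`, a coordinate of `ω^ε` in `W` is `0` only if it is resampled to `0`. -/
noncomputable def condBias (ε : ℝ) (W : Finset Λ) : Λ → ℝ :=
  fun i => if i ∈ W then 1 - ε / 2 else 1 / 2

lemma condBias_nonneg {ε : ℝ} (hε : ε ≤ 2) (W : Finset Λ) : 0 ≤ condBias ε W := by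
  intro i
  simp only [condBias, Pi.zero_apply]
  split_ifs <;> linarith

lemma condBias_le_one {ε : ℝ} (hε : 0 ≤ ε) (W : Finset Λ) : condBias ε W ≤ 1 := by
  intro i
  simp only [condBias, Pi.one_apply]
  split_ifs <;> linarith

lemma condBias_empty (ε : ℝ) : condBias ε (∅ : Finset Λ) = fun _ => 1 / 2 := by
  funext i
  simp [condBias]

lemma sum_cwt_of_ones [Fintype Λ] (ε : ℝ) (W : Finset Λ) (η : Λ → Bool) :
    ∑ ω : Λ → Bool, (if ∀ i ∈ W, ω i = true then ∏ i, cwt (1 / 2) ε (ω i) (η i) else 0)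
      = (1 / 2) ^ W.card * ∏ i, bern (condBias ε W i) (η i) := by
  let g (i : Λ) (b : Bool) : ℝ := if i ∈ W ∧ b = false then 0 else cwt (1 / 2) ε b (η i)
  have hfactor (ω : Λ → Bool) :
      (if ∀ i ∈ W, ω i = true then ∏ i, cwt (1 / 2) ε (ω i) (η i) else 0) = ∏ i, g i (ω i) := by
    split_ifs with hω
    · refine Finset.prod_congr rfl fun i _ => ?_
      simp +contextual [g, hω i]
    · simp only [not_forall] at hω
      obtain ⟨i, hi, hωi⟩ := hω
      exact (Finset.prod_eq_zero (mem_univ i) (by simp [g, hi, hωi])).symm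
  have hcoord (i : Λ) : g i true + g i false
      = (if i ∈ W then 1 / 2 else 1) * bern (condBias ε W i) (η i) := by
    by_cases hi : i ∈ W <;> cases hb : η i <;> simp [g, hi, hb, cwt, bern, condBias] <;> ring
  rw [Finset.sum_congr rfl fun ω _ => hfactor ω, sum_prod_bool, Finset.prod_congr rfl
    fun i _ => hcoord i, Finset.prod_mul_distrib, Finset.prod_ite_mem, Finset.univ_inter,
    Finset.prod_const]

lemma jpr_noisy_and_ones [Fintype Λ] (ε : ℝ) (f : (Λ → Bool) → Bool) (W : Finset Λ) :
    jpr (1 / 2) ε {q : (Λ → Bool) × (Λ → Bool) | f q.2 = true ∧ ∀ i ∈ W, q.1 i = true}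
      = (1 / 2) ^ W.card * prodProb (condBias ε W) f := by
  rw [jpr, Fintype.sum_prod_type, Finset.sum_comm, prodProb, Finset.mul_sum]
  refine Finset.sum_congr rfl fun η _ => ?_
  rw [← mul_assoc, mul_comm ((1 / 2 : ℝ) ^ W.card * _), ← sum_cwt_of_ones, Finset.mul_sum]
  refine Finset.sum_congr rfl fun ω _ => ?_
  simp only [Set.indicator_apply, jwt]
  by_cases hf : f η <;> by_cases hω : ∀ i ∈ W, ω i = true <;> simp [hf, hω]

theorem prNoisyOneGivenOnes_half_eq [Fintype Λ] (ε : ℝ) (f : (Λ → Bool) → Bool) (W : Finset Λ) :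
    prNoisyOneGivenOnes (1 / 2) ε f W = prodProb (condBias ε W) f := by
  have hden := jpr_noisy_and_ones ε (fun _ => true) W
  simp only [true_and, prodProb_true, mul_one] at hden
  rw [prNoisyOneGivenOnes, jpr_noisy_and_ones, hden, mul_div_cancel_left₀]
  positivity

end NoisyConditioning

section Witnesses

variable {Λ : Type*} {f : (Λ → Bool) → Bool}

lemma isOneWitness_iff_minimal {W : Finset Λ} : IsOneWitness f W ↔ Minimal (ForcesOne f) W := by
  simp only [IsOneWitness, minimal_iff]
  exact and_congr_right fun _ => forall_congr' fun W' => by tauto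

lemma ForcesOne.exists_isOneWitness_subset {V : Finset Λ} (h : ForcesOne f V) :
    ∃ W ⊆ V, IsOneWitness f W := by
  simpa only [isOneWitness_iff_minimal] using exists_minimal_le_of_wellFoundedLT _ V h

lemma forcesOne_iff_of_monotone [DecidableEq Λ] (hf : Monotone f) (W : Finset Λ) :
    ForcesOne f W ↔ f (fun i => decide (i ∈ W)) = true := by
  refine ⟨fun h => h _ fun i hi => decide_eq_true hi, fun h ω hω => ?_⟩
  refine Bool.eq_true_of_true_le (h ▸ hf fun i => ?_)
  by_cases hi : i ∈ W <;> simp [hi, hω]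

end Witnesses

section Majority

lemma maj5_monotone : Monotone maj5 := fun b b' h => by
  have hcard : (univ.filter fun i => b i = true).card ≤ (univ.filter fun i => b' i = true).card :=
    Finset.card_le_card fun i => by simpa using fun hi => Bool.eq_true_of_true_le (hi ▸ h i)
  unfold maj5
  by_cases h3 : 3 ≤ (univ.filter fun i => b i = true).card
  · simp [h3, h3.trans hcard]
  · simp [h3]

lemma maj5_comp_perm (σ : Equiv.Perm (Fin 5)) (b : Fin 5 → Bool) :
    maj5 (fun i => b (σ i)) = maj5 b := by
  unfold maj5
  congr 2
  exact Finset.card_equiv σ fun i => by simp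

lemma maj5_not (b : Fin 5 → Bool) : maj5 (fun i => !b i) = !maj5 b := by
  revert b
  decide

/-- Three coordinates of bias `q` and two fair ones: the majority is `1` if all three biased bits
are, with probability `3/4` if two are, and with probability `1/4` if one is. -/
lemma prodProb_maj5_first_three (q : ℝ) :
    prodProb (fun j : Fin 5 => if j ∈ ({0, 1, 2} : Finset (Fin 5)) then q else 1 / 2) maj5
      = (3 * q + 3 * q ^ 2 - 2 * q ^ 3) / 4 := by
  simp only [prodProb_fin_succ, prodProb_fin_zero, Fin.tail]
  simp +decide
  ring

lemma prodProb_maj5_of_card_eq_three {T : Finset (Fin 5)} (hT : T.card = 3) (q : ℝ) :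
    prodProb (fun j => if j ∈ T then q else 1 / 2) maj5 = (3 * q + 3 * q ^ 2 - 2 * q ^ 3) / 4 := by
  obtain ⟨σ, hσ⟩ := Equiv.Perm.exists_map_finset_eq T {0, 1, 2} (by rw [hT]; rfl)
  rw [← prodProb_maj5_first_three, prodProb_reindex σ.symm, ← hσ]
  simp only [Equiv.symm_symm, maj5_comp_perm, Finset.mem_map_equiv, Function.comp_def]

end Majority

section RecursiveMajority

def blockEquiv (k : ℕ) : Fin 5 × Fin (5 ^ k) ≃ Fin (5 ^ (k + 1)) :=
  finProdFinEquiv.trans (finCongr (pow_succ' 5 k).symm)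

lemma recMaj5_succ (k : ℕ) (ω : Fin (5 ^ (k + 1)) → Bool) :
    recMaj5 (k + 1) ω = maj5 fun j => recMaj5 k fun i => ω (blockEquiv k (j, i)) := by
  simp only [recMaj5]
  congr! with j i
  simp [blockEquiv, add_comm, mul_comm]

lemma recMaj5_monotone (k : ℕ) : Monotone (recMaj5 k) := by
  induction k with
  | zero => exact fun ω ω' h => h _
  | succ k ih =>
    intro ω ω' h
    simp only [recMaj5_succ]
    exact maj5_monotone fun j => ih fun i => h _

lemma recMaj5_not (k : ℕ) (ω : Fin (5 ^ k) → Bool) :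
    recMaj5 k (fun i => !ω i) = !recMaj5 k ω := by
  induction k with
  | zero => rfl
  | succ k ih => simp only [recMaj5_succ, ih, maj5_not]

lemma recMaj5_true (k : ℕ) : recMaj5 k (fun _ => true) = true := by
  induction k with
  | zero => rfl
  | succ k ih => simp only [recMaj5_succ, ih]; decide

lemma prodProb_recMaj5_succ (k : ℕ) (ρ : Fin (5 ^ (k + 1)) → ℝ) :
    prodProb ρ (recMaj5 (k + 1))
      = prodProb (fun j => prodProb (fun i => ρ (blockEquiv k (j, i))) (recMaj5 k)) maj5 := by
  rw [prodProb_reindex (blockEquiv k), ← prodProb_blocks]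
  simp only [recMaj5_succ, Function.comp_apply, Equiv.symm_apply_apply]
  rfl

end RecursiveMajority

section BlockWitnesses

variable {k : ℕ}

def blockTrace (W : Finset (Fin (5 ^ (k + 1)))) (j : Fin 5) : Finset (Fin (5 ^ k)) :=
  univ.filter fun i => blockEquiv k (j, i) ∈ W

def blockGlue (V : Fin 5 → Finset (Fin (5 ^ k))) : Finset (Fin (5 ^ (k + 1))) :=
  univ.filter fun m => ((blockEquiv k).symm m).2 ∈ V ((blockEquiv k).symm m).1

lemma blockTrace_blockGlue (V : Fin 5 → Finset (Fin (5 ^ k))) (j : Fin 5) :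
    blockTrace (blockGlue V) j = V j := by
  ext i
  simp [blockTrace, blockGlue]

lemma blockGlue_subset {V : Fin 5 → Finset (Fin (5 ^ k))} {W : Finset (Fin (5 ^ (k + 1)))}
    (h : ∀ j, V j ⊆ blockTrace W j) : blockGlue V ⊆ W := fun m hm => by
  simp only [blockGlue, mem_filter, mem_univ, true_and] at hm
  simpa [blockTrace] using h _ hm

lemma forcesOne_recMaj5_succ_iff (W : Finset (Fin (5 ^ (k + 1)))) :
    ForcesOne (recMaj5 (k + 1)) W ↔
      ∃ T : Finset (Fin 5), T.card = 3 ∧ ∀ j ∈ T, ForcesOne (recMaj5 k) (blockTrace W j) := by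
  have htrace (j : Fin 5) : (fun i => decide (blockEquiv k (j, i) ∈ W))
      = fun i => decide (i ∈ blockTrace W j) := by
    simp [blockTrace]
  simp only [forcesOne_iff_of_monotone (recMaj5_monotone _), recMaj5_succ, htrace, maj5,
    decide_eq_true_eq]
  constructor
  · rintro h
    obtain ⟨T, hT, hcard⟩ := Finset.exists_subset_card_eq h
    exact ⟨T, hcard, fun j hj => by simpa using hT hj⟩
  · rintro ⟨T, hcard, hT⟩
    exact hcard ▸ Finset.card_le_card fun j hj => by simpa using hT j hj

theorem IsOneWitness.exists_blocks {W : Finset (Fin (5 ^ (k + 1)))}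
    (hW : IsOneWitness (recMaj5 (k + 1)) W) :
    ∃ T : Finset (Fin 5), T.card = 3 ∧
      (∀ j ∈ T, IsOneWitness (recMaj5 k) (blockTrace W j)) ∧ ∀ j ∉ T, blockTrace W j = ∅ := by
  classical
  obtain ⟨T, hcard, hT⟩ := (forcesOne_recMaj5_succ_iff W).mp hW.1
  choose! V hVsub hV using fun j (hj : j ∈ T) => (hT j hj).exists_isOneWitness_subset
  -- Gluing 1-witnesses of three forcing blocks gives a forcing subset of `W`, hence `W` itself.
  have hglue : blockGlue (fun j => if j ∈ T then V j else ∅) = W := by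
    refine hW.2 _ (blockGlue_subset fun j => ?_) ((forcesOne_recMaj5_succ_iff _).mpr
      ⟨T, hcard, fun j hj => ?_⟩)
    · by_cases hj : j ∈ T <;> simp [hj, hVsub]
    · simpa [blockTrace_blockGlue, hj] using (hV j hj).1
  refine ⟨T, hcard, fun j hj => ?_, fun j hj => ?_⟩ <;>
    simp [← hglue, blockTrace_blockGlue, hj, hV]

end BlockWitnesses

instance nonempty_isOneWitness_recMaj5 (k : ℕ) :
    Nonempty {W : Finset (Fin (5 ^ k)) // IsOneWitness (recMaj5 k) W} := by
  have huniv := (forcesOne_iff_of_monotone (recMaj5_monotone k) univ).mpr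
    (by simpa using recMaj5_true k)
  obtain ⟨W, -, hW⟩ := huniv.exists_isOneWitness_subset
  exact ⟨⟨W, hW⟩⟩

section Contraction

noncomputable def contractionRate (ε : ℝ) : ℝ := (3 + 3 * (ε / 2) - 2 * (ε / 2) ^ 2) / 4

lemma contractionRate_nonneg {ε : ℝ} (h0 : 0 ≤ ε) (h1 : ε ≤ 1) : 0 ≤ contractionRate ε := by
  unfold contractionRate
  nlinarith

lemma contractionRate_lt_one {ε : ℝ} (hε : ε < 1) : contractionRate ε < 1 := by
  unfold contractionRate
  nlinarith

lemma one_sub_mul_contractionRate_le {ε d : ℝ} (hε : ε ≤ 1) (hd0 : 0 ≤ d) (hd : d ≤ ε / 2) :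
    1 - d * contractionRate ε ≤ (3 * (1 - d) + 3 * (1 - d) ^ 2 - 2 * (1 - d) ^ 3) / 4 := by
  unfold contractionRate
  have hfactor : 0 ≤ 3 - 2 * (ε / 2 + d) := by linarith
  nlinarith [mul_nonneg hd0 (mul_nonneg (sub_nonneg.mpr hd) hfactor)]

theorem one_sub_le_prodProb_recMaj5 {ε : ℝ} (hε : ε ∈ Set.Ioo 0 1) (k : ℕ)
    {W : Finset (Fin (5 ^ k))} (hW : IsOneWitness (recMaj5 k) W) :
    1 - ε / 2 * contractionRate ε ^ k ≤ prodProb (condBias ε W) (recMaj5 k) := by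
  obtain ⟨hε0, hε1⟩ := hε
  induction k with
  | zero =>
    have hmem : (0 : Fin (5 ^ 0)) ∈ W := by
      simpa [recMaj5] using (forcesOne_iff_of_monotone (recMaj5_monotone 0) W).mp hW.1
    rw [show recMaj5 0 = fun η => η 0 from rfl, prodProb_coord]
    simp [condBias, hmem]
  | succ k ih =>
    obtain ⟨T, hcard, hwit, hempty⟩ := hW.exists_blocks
    set d := ε / 2 * contractionRate ε ^ k
    have hrate_pow : contractionRate ε ^ k ≤ 1 :=
      pow_le_one₀ (contractionRate_nonneg hε0.le hε1.le) (contractionRate_lt_one hε1).le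
    have hd0 : 0 ≤ d := by
      have := pow_nonneg (contractionRate_nonneg hε0.le hε1.le) k
      positivity
    have hd : d ≤ ε / 2 := mul_le_of_le_one_right (by linarith) hrate_pow
    have hblock (j : Fin 5) : (fun i => condBias ε W (blockEquiv k (j, i)))
        = condBias ε (blockTrace W j) := by
      funext i
      simp [condBias, blockTrace]
    rw [prodProb_recMaj5_succ]
    simp only [hblock]
    calc 1 - ε / 2 * contractionRate ε ^ (k + 1) = 1 - d * contractionRate ε := by ring
      _ ≤ (3 * (1 - d) + 3 * (1 - d) ^ 2 - 2 * (1 - d) ^ 3) / 4 :=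
        one_sub_mul_contractionRate_le hε1.le hd0 hd
      _ = prodProb (fun j => if j ∈ T then 1 - d else 1 / 2) maj5 :=
        (prodProb_maj5_of_card_eq_three hcard _).symm
      _ ≤ _ := by
        refine prodProb_mono maj5_monotone (fun j => ?_) (fun j => ?_) (fun j => ?_)
        · simp only [Pi.zero_apply]
          split_ifs <;> linarith
        · by_cases hj : j ∈ T
          · simpa [hj] using ih (hwit j hj)
          · rw [if_neg hj, hempty j hj, condBias_empty, prodProb_half_of_selfDual (recMaj5_not k)]
        · exact prodProb_le_one (condBias_nonneg (by linarith) _) (condBias_le_one hε0.le _) _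

end Contraction

/-- For the recursive 5-majority function at `p = 1/2`, for every fixed
`ε ∈ (0,1)`, the conditional probability `P(f_n(ω^ε)=1 ∣ ω ≡ 1 on W)` tends to `1`
uniformly over all 1-witnesses `W`. -/
theorem stmt14 (ε : ℝ) (hε : ε ∈ Set.Ioo (0 : ℝ) 1) :
    Tendsto (fun k : ℕ =>
        ⨅ W : {W : Finset (Fin (5 ^ k)) // IsOneWitness (recMaj5 k) W},
          prNoisyOneGivenOnes (1/2) ε (recMaj5 k) W.1)
      atTop (nhds 1) := by
  obtain ⟨hε0, hε1⟩ := hε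
  have hnonneg {k : ℕ} (W : Finset (Fin (5 ^ k))) := condBias_nonneg (by linarith : ε ≤ 2) W
  have hle {k : ℕ} (W : Finset (Fin (5 ^ k))) := condBias_le_one hε0.le W
  have hlower := ((tendsto_pow_atTop_nhds_zero_of_lt_one (contractionRate_nonneg hε0.le hε1.le)
    (contractionRate_lt_one hε1)).const_mul (ε / 2)).const_sub 1
  simp only [prNoisyOneGivenOnes_half_eq]
  refine tendsto_of_tendsto_of_tendsto_of_le_of_le (by simpa using hlower) tendsto_const_nhds
    (fun k => le_ciInf fun W => one_sub_le_prodProb_recMaj5 ⟨hε0, hε1⟩ k W.2) fun k => ?_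
  obtain ⟨W⟩ := nonempty_isOneWitness_recMaj5 k
  exact ciInf_le_of_le ⟨0, Set.forall_mem_range.mpr fun W => prodProb_nonneg (hnonneg _) (hle _) _⟩
    W (prodProb_le_one (hnonneg _) (hle _) _)

end BooleanNoise
end

section
/- Let (f_n) be a sequence of monotone increasing Boolean functions f_n : {0,1}^{Λ_n} → {0,1} with parameters p_n that is 1-witness-disjoint, i.e., lim_{n→∞} max_{W ∈ W_1(f_n)} P( ⋃_{W' ∈ W_1(f_n), W'≠W, W'∩W≠∅} {ω ≡ 1 on W'} | ω ≡ 1 on W ) = 0. Let ℓ_n denote the minimum size of a 1-witness of f_n, and let ε = ε(n) ∈ (0,1) satisfy ε(n)·(1−p_n)·ℓ_n → ∞. Then (f_n) is 1-strongly noise sensitive w.r.t. ε(n). -/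
open Finset Filter

namespace BooleanNoise

/-- `max_{W ∈ W₁(f)} P(⋃_{W' ∈ W₁(f), W' ≠ W, W' ∩ W ≠ ∅} {ω ≡ 1 on W'} ∣ ω ≡ 1 on W)`:
the quantity whose vanishing defines 1-witness-disjointness. -/
noncomputable def overlapGap {Λ : Type*} [Fintype Λ] [DecidableEq Λ]
    (p : ℝ) (f : (Λ → Bool) → Bool) : ℝ :=
  ⨆ W : {W : Finset Λ // IsOneWitness f W},
    pr p {ω | (∃ W' : Finset Λ, IsOneWitness f W' ∧ W' ≠ W.1 ∧ (W' ∩ W.1).Nonempty ∧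
                ∀ i ∈ W', ω i = true) ∧
              ∀ i ∈ W.1, ω i = true}
      / pr p {ω | ∀ i ∈ W.1, ω i = true}


/-!
Fix a 1-witness `W`. Conditionally on `ω ≡ 1` on `W`, the noisy configuration `ω^ε` is again a
product measure: Bernoulli(`1 - ε(1-p)`) on `W` and Bernoulli(`p`) off `W`. These parameters
dominate `p`, so the increasing event `{f = 1}` only becomes likelier and the gap is nonnegative.
Conversely, if `f(ω^ε) = 1` then some 1-witness `W'` is all ones in `ω^ε`. Either `W' = W`, which
has probability `(1 - ε(1-p))^|W| ≤ exp(-ε(1-p)ℓ)`; or `W'` meets `W`, an increasing event that is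
likelier still when the parameters on `W` are raised to `1`, i.e. under `ω ≡ 1` on `W`, which is the
overlap term; or `W'` is disjoint from `W`, an event that ignores the coordinates in `W` and so
has probability at most `P(f = 1)`.
-/

theorem bern_add (r : ℝ) : bern r true + bern r false = 1 := by simp [bern]

theorem bern_nonneg_s15 {r : ℝ} (hr : r ∈ Set.Icc (0 : ℝ) 1) (b : Bool) : 0 ≤ bern r b := by
  cases b <;> simp [bern, hr.1, hr.2]

section ProductBernoulli

variable {Λ : Type*} [Fintype Λ] [DecidableEq Λ]

def bernWt (q : Λ → ℝ) (ω : Λ → Bool) : ℝ := ∏ i, bern (q i) (ω i)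

noncomputable def bernPr (q : Λ → ℝ) (A : Set (Λ → Bool)) : ℝ :=
  ∑ ω : Λ → Bool, A.indicator (bernWt q) ω

theorem pr_eq_bernPr (p : ℝ) (A : Set (Λ → Bool)) : pr p A = bernPr (fun _ => p) A := rfl

variable {q : Λ → ℝ} {A B : Set (Λ → Bool)}

omit [DecidableEq Λ] in
theorem bernWt_nonneg (hq : ∀ i, q i ∈ Set.Icc (0 : ℝ) 1) (ω : Λ → Bool) : 0 ≤ bernWt q ω :=
  Finset.prod_nonneg fun i _ => bern_nonneg_s15 (hq i) (ω i)

theorem bernPr_mono (hq : ∀ i, q i ∈ Set.Icc (0 : ℝ) 1) (hAB : A ⊆ B) :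
    bernPr q A ≤ bernPr q B :=
  Finset.sum_le_sum fun ω _ =>
    Set.indicator_le_indicator_of_subset hAB (bernWt_nonneg hq) ω

theorem bernPr_nonneg (hq : ∀ i, q i ∈ Set.Icc (0 : ℝ) 1) (A : Set (Λ → Bool)) :
    0 ≤ bernPr q A := by
  simpa [bernPr] using bernPr_mono hq (Set.empty_subset A)

theorem bernPr_le_add_of_subset_union {C : Set (Λ → Bool)} (hq : ∀ i, q i ∈ Set.Icc (0 : ℝ) 1)
    (h : A ⊆ B ∪ C) : bernPr q A ≤ bernPr q B + bernPr q C := by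
  refine (bernPr_mono hq h).trans ?_
  rw [bernPr, bernPr, bernPr, ← Finset.sum_add_distrib]
  refine Finset.sum_le_sum fun ω _ => ?_
  rw [← Set.indicator_union_add_inter_apply]
  exact le_add_of_nonneg_right (Set.indicator_nonneg (fun ω _ => bernWt_nonneg hq ω) ω)

theorem bernPr_univ (q : Λ → ℝ) : bernPr q Set.univ = 1 := by
  rw [bernPr, Set.indicator_univ]
  simp only [bernWt, ← Fintype.prod_sum, Fintype.sum_bool, bern_add, Finset.prod_const_one]

theorem indicator_ones_prod (W : Finset Λ) (g : Λ → Bool → ℝ) (ω : Λ → Bool) :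
    {ω : Λ → Bool | ∀ i ∈ W, ω i = true}.indicator (fun ω => ∏ i, g i (ω i)) ω
      = ∏ i, if i ∈ W ∧ ω i = false then 0 else g i (ω i) := by
  simp only [Set.indicator_apply, Set.mem_ofPred_eq]
  split_ifs with hω
  · exact Finset.prod_congr rfl fun i _ => by simp +contextual [hω i]
  · push Not at hω
    obtain ⟨i, hiW, hi⟩ := hω
    exact (Finset.prod_eq_zero (Finset.mem_univ i) (by simp_all)).symm

theorem bernPr_inter_ones (q : Λ → ℝ) (W : Finset Λ) (P : Set (Λ → Bool)) :
    bernPr q {ω | ω ∈ P ∧ ∀ i ∈ W, ω i = true}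
      = (∏ i ∈ W, q i) * bernPr (W.piecewise (fun _ => 1) q) P := by
  have hcoord : ∀ (ω : Λ → Bool) i, (if i ∈ W ∧ ω i = false then 0 else bern (q i) (ω i))
      = (if i ∈ W then q i else 1) * bern (W.piecewise (fun _ => 1) q i) (ω i) := by
    intro ω i
    by_cases hi : i ∈ W <;> cases ω i <;> simp [hi, bern]
  have hones : {ω : Λ → Bool | ∀ i ∈ W, ω i = true}.indicator (bernWt q)
      = fun ω => (∏ i ∈ W, q i) * bernWt (W.piecewise (fun _ => 1) q) ω := by
    ext ω
    rw [show bernWt q = fun ω => ∏ i, bern (q i) (ω i) from rfl, indicator_ones_prod,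
      Finset.prod_congr rfl fun i _ => hcoord ω i, Finset.prod_mul_distrib, Finset.prod_ite_mem,
      Finset.univ_inter, bernWt]
  rw [bernPr, bernPr, Finset.mul_sum]
  refine Finset.sum_congr rfl fun ω _ => ?_
  rw [show {ω | ω ∈ P ∧ ∀ i ∈ W, ω i = true} = P ∩ {ω | ∀ i ∈ W, ω i = true} from rfl,
    ← Set.indicator_indicator, hones, Set.indicator_mul_right]

theorem bernPr_ones (q : Λ → ℝ) (W : Finset Λ) :
    bernPr q {ω | ∀ i ∈ W, ω i = true} = ∏ i ∈ W, q i := by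
  simpa [bernPr_univ] using bernPr_inter_ones q W Set.univ

end ProductBernoulli

section Comparison

variable {Λ : Type*} [Fintype Λ] [DecidableEq Λ] {q : Λ → ℝ} {A : Set (Λ → Bool)}

theorem bernPr_eq_sum_split (q : Λ → ℝ) (i : Λ) (A : Set (Λ → Bool)) :
    bernPr q A = ∑ η : {j // j ≠ i} → Bool, (∏ j : {j // j ≠ i}, bern (q j) (η j)) *
      ∑ b, bern (q i) b * A.indicator 1 ((Equiv.funSplitAt i Bool).symm (b, η)) := by
  classical
  rw [bernPr, ← (Equiv.funSplitAt i Bool).symm.sum_comp, Fintype.sum_prod_type, Finset.sum_comm]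
  refine Finset.sum_congr rfl fun η _ => ?_
  rw [Finset.mul_sum]
  refine Finset.sum_congr rfl fun b _ => ?_
  simp only [Set.indicator_apply, bernWt, Fintype.prod_eq_mul_prod_subtype_ne _ i]
  split_ifs
  · simp [Equiv.funSplitAt_symm_apply, mul_comm, fun j : {j // j ≠ i} => j.2]
  · simp

theorem bernPr_le_bernPr_update (hA : IsUpperSet A) (hq : ∀ j, q j ∈ Set.Icc (0 : ℝ) 1)
    {i : Λ} {t : ℝ} (ht : q i ≤ t) : bernPr q A ≤ bernPr (Function.update q i t) A := by
  rw [bernPr_eq_sum_split q i, bernPr_eq_sum_split _ i]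
  refine Finset.sum_le_sum fun η _ => ?_
  simp only [Function.update_self, fun j : {j // j ≠ i} => Function.update_of_ne j.2 t q,
    Fintype.sum_bool]
  refine mul_le_mul_of_nonneg_left ?_ (Finset.prod_nonneg fun j _ => bern_nonneg_s15 (hq j) _)
  have hup : A.indicator (1 : (Λ → Bool) → ℝ) ((Equiv.funSplitAt i Bool).symm (false, η))
      ≤ A.indicator 1 ((Equiv.funSplitAt i Bool).symm (true, η)) := by
    have hle : (Equiv.funSplitAt i Bool).symm (false, η)
        ≤ (Equiv.funSplitAt i Bool).symm (true, η) := fun j => by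
      by_cases hj : j = i <;> simp [Equiv.funSplitAt_symm_apply, hj]
    by_cases h : (Equiv.funSplitAt i Bool).symm (false, η) ∈ A
    · simp [Set.indicator_of_mem h, Set.indicator_of_mem (hA hle h)]
    · rw [Set.indicator_of_notMem h]
      exact Set.indicator_nonneg (fun _ _ => zero_le_one) _
  simp only [bern, if_true, Bool.false_eq_true, if_false]
  nlinarith

theorem bernPr_update_eq {i : Λ} (hA : ∀ ω b, Function.update ω i b ∈ A ↔ ω ∈ A) (t : ℝ) :
    bernPr (Function.update q i t) A = bernPr q A := by
  rw [bernPr_eq_sum_split q i, bernPr_eq_sum_split _ i]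
  refine Finset.sum_congr rfl fun η _ => ?_
  simp only [Function.update_self, fun j : {j // j ≠ i} => Function.update_of_ne j.2 t q]
  have hflip : (Equiv.funSplitAt i Bool).symm (true, η)
      = Function.update ((Equiv.funSplitAt i Bool).symm (false, η)) i true := by
    ext j
    by_cases hj : j = i <;> simp [Equiv.funSplitAt_symm_apply, hj]
  have hconst : ∀ r : ℝ, ∑ b, bern r b * A.indicator 1 ((Equiv.funSplitAt i Bool).symm (b, η))
      = A.indicator 1 ((Equiv.funSplitAt i Bool).symm (false, η)) := by
    intro r
    classical
    rw [Fintype.sum_bool, hflip]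
    simp only [Set.indicator_apply, hA, Pi.one_apply]
    rw [← add_mul, bern_add, one_mul]
  rw [hconst, hconst]

theorem bernPr_le_bernPr {q' : Λ → ℝ} (hA : IsUpperSet A) (hq : ∀ i, q i ∈ Set.Icc (0 : ℝ) 1)
    (hq' : ∀ i, q' i ∈ Set.Icc (0 : ℝ) 1) (hle : q ≤ q') : bernPr q A ≤ bernPr q' A := by
  suffices h : ∀ S : Finset Λ, bernPr q A ≤ bernPr (S.piecewise q' q) A by
    simpa using h Finset.univ
  intro S
  induction S using Finset.induction_on with
  | empty => simp
  | insert i S hi ih =>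
    rw [Finset.piecewise_insert]
    refine ih.trans (bernPr_le_bernPr_update hA (fun j => ?_) ?_)
    · by_cases hj : j ∈ S <;> simp [hj, hq j, hq' j]
    · rw [Finset.piecewise_eq_of_notMem _ _ _ hi]
      exact hle i

theorem bernPr_piecewise_eq {T : Finset Λ} (q' : Λ → ℝ)
    (hA : ∀ i ∈ T, ∀ ω b, Function.update ω i b ∈ A ↔ ω ∈ A) :
    bernPr (T.piecewise q' q) A = bernPr q A := by
  induction T using Finset.induction_on with
  | empty => simp
  | insert i T hi ih =>
    rw [Finset.piecewise_insert, bernPr_update_eq (hA i (Finset.mem_insert_self i T)),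
      ih fun j hj => hA j (Finset.mem_insert_of_mem hj)]

end Comparison

section Noise

variable {Λ : Type*} [DecidableEq Λ]

/-- Given `ω ≡ 1` on `W`, a coordinate of `ω^ε` in `W` is `0` only if it is resampled to `0`. -/
def noisyParam (p ε : ℝ) (W : Finset Λ) : Λ → ℝ :=
  W.piecewise (fun _ => 1 - ε * (1 - p)) fun _ => p

theorem noisyParam_of_mem {p ε : ℝ} {W : Finset Λ} {i : Λ} (hi : i ∈ W) :
    noisyParam p ε W i = 1 - ε * (1 - p) :=
  Finset.piecewise_eq_of_mem _ _ _ hi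

theorem noisyParam_of_notMem {p ε : ℝ} {W : Finset Λ} {i : Λ} (hi : i ∉ W) :
    noisyParam p ε W i = p :=
  Finset.piecewise_eq_of_notMem _ _ _ hi

theorem cwt_true (p ε : ℝ) (b : Bool) : cwt p ε true b = p * bern (1 - ε * (1 - p)) b := by
  cases b <;> simp only [cwt, bern, if_true, Bool.false_eq_true, if_false] <;> ring

theorem cwt_true_add_cwt_false (p ε : ℝ) (b : Bool) :
    cwt p ε true b + cwt p ε false b = bern p b := by
  cases b <;> simp [cwt, bern] <;> ring

theorem jpr_snd_mem_inter_ones [Fintype Λ] (p ε : ℝ) (W : Finset Λ) (E : Set (Λ → Bool)) :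
    jpr p ε {x | x.2 ∈ E ∧ ∀ i ∈ W, x.1 i = true} = p ^ W.card * bernPr (noisyParam p ε W) E := by
  classical
  rw [jpr, Fintype.sum_prod_type, Finset.sum_comm, bernPr, Finset.mul_sum]
  refine Finset.sum_congr rfl fun y _ => ?_
  by_cases hy : y ∈ E
  · have hx : ∀ x : Λ → Bool,
        {x : (Λ → Bool) × (Λ → Bool) | x.2 ∈ E ∧ ∀ i ∈ W, x.1 i = true}.indicator (jwt p ε) (x, y)
          = {x : Λ → Bool | ∀ i ∈ W, x i = true}.indicator
              (fun x => ∏ i, cwt p ε (x i) (y i)) x := by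
      intro x
      simp only [Set.indicator_apply, Set.mem_ofPred_eq, hy, true_and, jwt]
    have hcoord : ∀ i, ∑ b, (if i ∈ W ∧ b = false then 0 else cwt p ε b (y i))
        = (if i ∈ W then p else 1) * bern (noisyParam p ε W i) (y i) := by
      intro i
      by_cases hi : i ∈ W
      · simp [hi, noisyParam, cwt_true]
      · simp [hi, noisyParam, cwt_true_add_cwt_false]
    rw [Finset.sum_congr rfl fun x _ =>
        (hx x).trans (indicator_ones_prod W (fun i b => cwt p ε b (y i)) x),
      ← Fintype.prod_sum (fun i b => if i ∈ W ∧ b = false then 0 else cwt p ε b (y i))]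
    simp only [hcoord, Finset.prod_mul_distrib, Finset.prod_ite_mem, Finset.univ_inter,
      Finset.prod_const, Set.indicator_of_mem hy, bernWt]
  · rw [Set.indicator_of_notMem hy, mul_zero]
    exact Finset.sum_eq_zero fun x _ => Set.indicator_of_notMem (fun h => hy h.1) _

theorem prNoisyOneGivenOnes_eq [Fintype Λ] {p : ℝ} (hp : p ≠ 0) (ε : ℝ) (f : (Λ → Bool) → Bool)
    (W : Finset Λ) :
    prNoisyOneGivenOnes p ε f W = bernPr (noisyParam p ε W) {ω | f ω = true} := by
  have hones := jpr_snd_mem_inter_ones p ε W Set.univ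
  simp only [Set.mem_univ, true_and, bernPr_univ, mul_one] at hones
  rw [prNoisyOneGivenOnes, hones, div_eq_iff (pow_ne_zero _ hp), mul_comm]
  exact jpr_snd_mem_inter_ones p ε W {ω | f ω = true}

end Noise

section Witnesses

variable {Λ : Type*} {f : (Λ → Bool) → Bool}

theorem isUpperSet_setOf_true (hf : MonotoneBool f) : IsUpperSet {ω : Λ → Bool | f ω = true} :=
  fun _ _ hle hω => Bool.eq_true_of_true_le (hω ▸ hf hle)

theorem exists_isOneWitness_of_true [Fintype Λ] (hf : MonotoneBool f) {η : Λ → Bool}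
    (hη : f η = true) :
    ∃ W, IsOneWitness f W ∧ ∀ i ∈ W, η i = true := by
  have hforces : ForcesOne f (Finset.univ.filter fun i => η i = true) := fun ω hω =>
    isUpperSet_setOf_true hf (fun i => by cases hi : η i <;> simp_all) hη
  obtain ⟨W, hWS, hmin⟩ := exists_minimal_le_of_wellFoundedLT _ _ hforces
  exact ⟨W, ⟨hmin.prop, fun W' hW' hf' => le_antisymm hW' (hmin.le_of_le hf' hW')⟩,
    fun i hi => by simpa using hWS hi⟩

def overlapEvent [DecidableEq Λ] (f : (Λ → Bool) → Bool) (W : Finset Λ) : Set (Λ → Bool) :=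
  {ω | ∃ W', IsOneWitness f W' ∧ W' ≠ W ∧ (W' ∩ W).Nonempty ∧ ∀ i ∈ W', ω i = true}

def disjointEvent (f : (Λ → Bool) → Bool) (W : Finset Λ) : Set (Λ → Bool) :=
  {ω | ∃ W', IsOneWitness f W' ∧ Disjoint W' W ∧ ∀ i ∈ W', ω i = true}

theorem setOf_true_subset_union [Fintype Λ] [DecidableEq Λ] (hf : MonotoneBool f)
    (W : Finset Λ) :
    {ω | f ω = true} ⊆
      {ω | ∀ i ∈ W, ω i = true} ∪ (overlapEvent f W ∪ disjointEvent f W) := by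
  intro η hη
  obtain ⟨W', hW', hones⟩ := exists_isOneWitness_of_true hf hη
  by_cases hWW : W' = W
  · exact Or.inl (hWW ▸ hones)
  by_cases hdisj : Disjoint W' W
  · exact Or.inr (Or.inr ⟨W', hW', hdisj, hones⟩)
  · exact Or.inr (Or.inl ⟨W', hW', hWW, Finset.not_disjoint_iff_nonempty_inter.1 hdisj, hones⟩)

theorem isUpperSet_overlapEvent [DecidableEq Λ] (f : (Λ → Bool) → Bool) (W : Finset Λ) :
    IsUpperSet (overlapEvent f W) := by
  rintro ω ω' hle ⟨W', hW', hne, hint, hones⟩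
  exact ⟨W', hW', hne, hint, fun i hi => Bool.eq_true_of_true_le (hones i hi ▸ hle i)⟩

theorem disjointEvent_subset (f : (Λ → Bool) → Bool) (W : Finset Λ) :
    disjointEvent f W ⊆ {ω | f ω = true} := fun _ ⟨_, hW', _, hones⟩ => hW'.1 _ hones

theorem update_mem_disjointEvent_iff [DecidableEq Λ] {W : Finset Λ} {i : Λ} (hi : i ∈ W)
    (ω : Λ → Bool) (b : Bool) :
    Function.update ω i b ∈ disjointEvent f W ↔ ω ∈ disjointEvent f W := by
  have hupd : ∀ W' : Finset Λ, Disjoint W' W → ∀ j ∈ W', Function.update ω i b j = ω j :=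
    fun W' hdisj j hj =>
      Function.update_of_ne (fun h => Finset.disjoint_left.1 hdisj (h ▸ hj) hi) _ _
  constructor
  · rintro ⟨W', hW', hdisj, hones⟩
    exact ⟨W', hW', hdisj, fun j hj => hupd W' hdisj j hj ▸ hones j hj⟩
  · rintro ⟨W', hW', hdisj, hones⟩
    exact ⟨W', hW', hdisj, fun j hj => (hupd W' hdisj j hj).symm ▸ hones j hj⟩

end Witnesses

section Bounds

variable {Λ : Type*} [Fintype Λ] [DecidableEq Λ] {p ε : ℝ} {f : (Λ → Bool) → Bool}

noncomputable def overlapRatio (p : ℝ) (f : (Λ → Bool) → Bool) (W : Finset Λ) : ℝ :=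
  pr p {ω | ω ∈ overlapEvent f W ∧ ∀ i ∈ W, ω i = true} / pr p {ω | ∀ i ∈ W, ω i = true}

theorem overlapRatio_le_overlapGap {W : Finset Λ} (hW : IsOneWitness f W) :
    overlapRatio p f W ≤ overlapGap p f :=
  le_ciSup (f := fun W : {W // IsOneWitness f W} => overlapRatio p f W.1)
    (Set.finite_range _).bddAbove ⟨W, hW⟩

theorem overlapGap_nonneg (hp : p ∈ Set.Icc (0 : ℝ) 1) : 0 ≤ overlapGap p f :=
  Real.iSup_nonneg fun _ =>
    div_nonneg (bernPr_nonneg (fun _ => hp) _) (bernPr_nonneg (fun _ => hp) _)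

theorem mul_one_sub_mem_Icc (hp : p ∈ Set.Icc (0 : ℝ) 1) (hε : ε ∈ Set.Icc (0 : ℝ) 1) :
    ε * (1 - p) ∈ Set.Icc (0 : ℝ) 1 :=
  ⟨mul_nonneg hε.1 (by linarith [hp.2]), by nlinarith [hp.1, hp.2, hε.1, hε.2]⟩

omit [Fintype Λ] in
theorem noisyParam_mem_Icc (hp : p ∈ Set.Icc (0 : ℝ) 1) (hε : ε ∈ Set.Icc (0 : ℝ) 1)
    (W : Finset Λ) (i : Λ) : noisyParam p ε W i ∈ Set.Icc (0 : ℝ) 1 := by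
  have hδ := mul_one_sub_mem_Icc hp hε
  by_cases hi : i ∈ W
  · rw [noisyParam_of_mem hi]
    exact ⟨by linarith [hδ.2], by linarith [hδ.1]⟩
  · rwa [noisyParam_of_notMem hi]

theorem pr_le_prNoisyOneGivenOnes (hp : p ∈ Set.Ioc (0 : ℝ) 1) (hε : ε ∈ Set.Icc (0 : ℝ) 1)
    (hf : MonotoneBool f) (W : Finset Λ) :
    pr p {ω | f ω = true} ≤ prNoisyOneGivenOnes p ε f W := by
  have hp' : p ∈ Set.Icc (0 : ℝ) 1 := Set.Ioc_subset_Icc_self hp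
  rw [prNoisyOneGivenOnes_eq hp.1.ne', pr_eq_bernPr]
  refine bernPr_le_bernPr (isUpperSet_setOf_true hf) (fun _ => hp') (noisyParam_mem_Icc hp' hε W)
    fun i => ?_
  by_cases hi : i ∈ W
  · rw [noisyParam_of_mem hi]
    nlinarith [hp.1, hp.2, hε.1, hε.2]
  · rw [noisyParam_of_notMem hi]

theorem bernPr_noisyParam_ones (p ε : ℝ) (W : Finset Λ) :
    bernPr (noisyParam p ε W) {ω | ∀ i ∈ W, ω i = true} = (1 - ε * (1 - p)) ^ W.card := by
  rw [bernPr_ones, Finset.prod_congr rfl fun i hi => noisyParam_of_mem hi, Finset.prod_const]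

theorem bernPr_noisyParam_overlapEvent_le (hp : p ∈ Set.Ioc (0 : ℝ) 1)
    (hε : ε ∈ Set.Icc (0 : ℝ) 1) (f : (Λ → Bool) → Bool) (W : Finset Λ) :
    bernPr (noisyParam p ε W) (overlapEvent f W) ≤ overlapRatio p f W := by
  have hp' : p ∈ Set.Icc (0 : ℝ) 1 := Set.Ioc_subset_Icc_self hp
  have hq := noisyParam_mem_Icc hp' hε W
  have hratio : overlapRatio p f W
      = bernPr (W.piecewise (fun _ => 1) fun _ => p) (overlapEvent f W) := by
    rw [overlapRatio, pr_eq_bernPr, pr_eq_bernPr, bernPr_inter_ones, bernPr_ones,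
      Finset.prod_const, mul_div_cancel_left₀ _ (pow_ne_zero _ hp.1.ne')]
  rw [hratio]
  refine bernPr_le_bernPr (isUpperSet_overlapEvent f W) hq (fun i => ?_) fun i => ?_
  · by_cases hi : i ∈ W <;> simp [hi, hp'.1, hp'.2]
  · by_cases hi : i ∈ W
    · rw [Finset.piecewise_eq_of_mem _ _ _ hi]
      exact (hq i).2
    · rw [noisyParam_of_notMem hi, Finset.piecewise_eq_of_notMem _ _ _ hi]

theorem bernPr_noisyParam_disjointEvent_le (hp : p ∈ Set.Icc (0 : ℝ) 1) (ε : ℝ)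
    (f : (Λ → Bool) → Bool) (W : Finset Λ) :
    bernPr (noisyParam p ε W) (disjointEvent f W) ≤ pr p {ω | f ω = true} := by
  rw [noisyParam, bernPr_piecewise_eq _ fun i hi => update_mem_disjointEvent_iff hi]
  exact bernPr_mono (fun _ => hp) (disjointEvent_subset f W)

theorem prNoisyOneGivenOnes_le (hp : p ∈ Set.Ioc (0 : ℝ) 1) (hε : ε ∈ Set.Icc (0 : ℝ) 1)
    (hf : MonotoneBool f) (W : Finset Λ) :
    prNoisyOneGivenOnes p ε f W
      ≤ (1 - ε * (1 - p)) ^ W.card + overlapRatio p f W + pr p {ω | f ω = true} := by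
  have hq := noisyParam_mem_Icc (Set.Ioc_subset_Icc_self hp) hε W
  rw [prNoisyOneGivenOnes_eq hp.1.ne', ← bernPr_noisyParam_ones p ε W]
  calc bernPr (noisyParam p ε W) {ω | f ω = true}
      ≤ bernPr (noisyParam p ε W) {ω | ∀ i ∈ W, ω i = true}
        + bernPr (noisyParam p ε W) (overlapEvent f W ∪ disjointEvent f W) :=
        bernPr_le_add_of_subset_union hq (setOf_true_subset_union hf W)
    _ ≤ bernPr (noisyParam p ε W) {ω | ∀ i ∈ W, ω i = true}
        + (bernPr (noisyParam p ε W) (overlapEvent f W)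
          + bernPr (noisyParam p ε W) (disjointEvent f W)) := by
        gcongr
        exact bernPr_le_add_of_subset_union hq subset_rfl
    _ ≤ _ := by
        linarith [bernPr_noisyParam_overlapEvent_le hp hε f W,
          bernPr_noisyParam_disjointEvent_le (Set.Ioc_subset_Icc_self hp) ε f W]

end Bounds

theorem one_sub_pow_le_exp_neg_mul {x : ℝ} (hx : x ∈ Set.Icc (0 : ℝ) 1) {ℓ n : ℕ} (hℓ : ℓ ≤ n) :
    (1 - x) ^ n ≤ Real.exp (-(x * ℓ)) :=
  calc (1 - x) ^ n ≤ (1 - x) ^ ℓ :=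
        pow_le_pow_of_le_one (by linarith [hx.2]) (by linarith [hx.1]) hℓ
    _ ≤ Real.exp (-x) ^ ℓ := pow_le_pow_left₀ (by linarith [hx.2]) (Real.one_sub_le_exp_neg x) ℓ
    _ = Real.exp (-(x * ℓ)) := by rw [← Real.exp_nat_mul]; ring_nf

section Gap

variable {Λ : Type*} [Fintype Λ] [DecidableEq Λ] {p ε : ℝ} {f : (Λ → Bool) → Bool}

theorem oneSNSgap_nonneg (hp : p ∈ Set.Ioc (0 : ℝ) 1) (hε : ε ∈ Set.Icc (0 : ℝ) 1)
    (hf : MonotoneBool f) : 0 ≤ oneSNSgap p ε f :=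
  Real.iSup_nonneg fun W => sub_nonneg.2 (pr_le_prNoisyOneGivenOnes hp hε hf W.1)

theorem oneSNSgap_le (hp : p ∈ Set.Ioc (0 : ℝ) 1) (hε : ε ∈ Set.Icc (0 : ℝ) 1)
    (hf : MonotoneBool f) {ℓ : ℕ} (hℓ : ∀ W, IsOneWitness f W → ℓ ≤ W.card) :
    oneSNSgap p ε f ≤ overlapGap p f + Real.exp (-(ε * (1 - p) * ℓ)) := by
  have hp' : p ∈ Set.Icc (0 : ℝ) 1 := Set.Ioc_subset_Icc_self hp
  have hδ := mul_one_sub_mem_Icc hp' hε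
  refine Real.iSup_le (fun W => ?_) (add_nonneg (overlapGap_nonneg hp') (Real.exp_pos _).le)
  have hbound := prNoisyOneGivenOnes_le hp hε hf W.1
  linarith [one_sub_pow_le_exp_neg_mul hδ (hℓ W.1 W.2), overlapRatio_le_overlapGap (p := p) W.2]

end Gap

/-- If a sequence of monotone Boolean functions is 1-witness-disjoint, and
`ℓ_n` is the minimum size of a 1-witness with `ε(n)·(1-p_n)·ℓ_n → ∞`, then the sequence is
1-strongly noise sensitive w.r.t. `ε(n)`. -/
theorem stmt15 {Λ : ℕ → Type*} [∀ n, Fintype (Λ n)] [∀ n, DecidableEq (Λ n)]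
    (p : ℕ → ℝ) (hp : ∀ n, p n ∈ Set.Ioo (0 : ℝ) 1)
    (f : ∀ n, (Λ n → Bool) → Bool) (hmono : ∀ n, MonotoneBool (f n))
    (hdisj : Tendsto (fun n => overlapGap (p n) (f n)) atTop (nhds 0))
    (ℓ : ℕ → ℕ)
    (hmin : ∀ n (W : Finset (Λ n)), IsOneWitness (f n) W → ℓ n ≤ W.card)
    (ε : ℕ → ℝ) (hε : ∀ n, ε n ∈ Set.Ioo (0 : ℝ) 1)
    (hbig : Tendsto (fun n => ε n * (1 - p n) * (ℓ n : ℝ)) atTop atTop) :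
    Tendsto (fun n => oneSNSgap (p n) (ε n) (f n)) atTop (nhds 0) := by
  have hp' := fun n => Set.Ioo_subset_Ioc_self (hp n)
  have hε' := fun n => Set.Ioo_subset_Icc_self (hε n)
  have hexp : Tendsto (fun n => Real.exp (-(ε n * (1 - p n) * ℓ n))) atTop (nhds 0) :=
    Real.tendsto_exp_atBot.comp (tendsto_neg_atTop_atBot.comp hbig)
  refine squeeze_zero (fun n => oneSNSgap_nonneg (hp' n) (hε' n) (hmono n))
    (fun n => oneSNSgap_le (hp' n) (hε' n) (hmono n) (hmin n)) ?_
  simpa using hdisj.add hexp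

end BooleanNoise
end
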